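/- arXiv:2312.03188 — 4 statements merged into one kernel-verified Lean document; each statement's English description precedes it below -/
import Mathlib

section
/- Let {Π_i}_{i=1}^n be a PVM on ℂ^m and let G be a positive semidefinite matrix on ℂ^m with G ⪯ I. For i ∈ {1,…,n} define the 2×2 block matrix Π̂_i := [[√G Π_i √G, −√G Π_i √(I−G)], [−√(I−G) Π_i √G, √(I−G) Π_i √(I−G)]] on ℂ^2 ⊗ ℂ^m ≅ ℂ^{2m}, and define Π̂_0 := [[I − G, √G √(I−G)], [√G √(I−G), G]]. Then {Π̂_i}_{i=0}^n is a PVM on ℂ^{2m}, i.e. each Π̂_i is an orthogonal projection and Σ_{i=0}^n Π̂_i = I_{2m}. Moreover, compressing to the first block reproduces the POVM E: the (1,1) block of Π̂_i equals √G Π_i √G for every i ∈ {1,…,n} and equals I − G for i = 0. -/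
open scoped BigOperators ComplexOrder
open scoped Matrix

/-- The positive semidefinite square root, as defined in Mathlib of December 2024
(`Matrix.PosSemidef.sqrt`, since removed from Mathlib). -/
noncomputable def Matrix.PosSemidef.sqrt {n 𝕜 : Type*} [Fintype n] [RCLike 𝕜] [DecidableEq n]
    {A : Matrix n n 𝕜} (hA : A.PosSemidef) : Matrix n n 𝕜 :=
  hA.1.eigenvectorUnitary.1 * Matrix.diagonal ((↑) ∘ (Real.sqrt ∘ hA.1.eigenvalues)) *
    (star hA.1.eigenvectorUnitary : Matrix n n 𝕜)

lemma sqrt_eq_cfc_aux {m : ℕ} (G : Matrix (Fin m) (Fin m) ℂ) (hG : G.PosSemidef) :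
    hG.sqrt = cfc Real.sqrt G := by
  rw [hG.1.cfc_eq, Matrix.IsHermitian.cfc, Unitary.conjStarAlgAut_apply]; rfl

lemma sqrt_herm_aux {m : ℕ} (G : Matrix (Fin m) (Fin m) ℂ) (hG : G.PosSemidef) :
    (hG.sqrt)ᴴ = hG.sqrt := by
  rw [sqrt_eq_cfc_aux G hG]
  exact (cfc_predicate Real.sqrt G : IsSelfAdjoint _)

lemma sqrt_mul_self_aux {m : ℕ} (G : Matrix (Fin m) (Fin m) ℂ) (hG : G.PosSemidef) :
    hG.sqrt * hG.sqrt = G := by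
  rw [sqrt_eq_cfc_aux G hG, ← cfc_mul Real.sqrt Real.sqrt G]
  conv_rhs => rw [← cfc_id' ℝ G hG.1.isSelfAdjoint]
  refine cfc_congr fun x hx => ?_
  obtain ⟨i, rfl⟩ := hG.1.spectrum_real_eq_range_eigenvalues ▸ hx
  exact Real.mul_self_sqrt (hG.eigenvalues_nonneg i)

/-- √G and √(1-G) commute, via the continuous functional calculus. -/
lemma sqrt_comm_aux {m : ℕ} (G : Matrix (Fin m) (Fin m) ℂ) (hG : G.PosSemidef)
    (hGI : (1 - G).PosSemidef) : hG.sqrt * hGI.sqrt = hGI.sqrt * hG.sqrt := by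
  have hAcfc : hG.sqrt = cfc Real.sqrt G := by
    exact sqrt_eq_cfc_aux G hG
  have h2 : cfc (fun x : ℝ => 1 - x) G = 1 - G := by
    rw [cfc_sub (fun _ : ℝ => (1:ℝ)) (fun x : ℝ => x) G,
      cfc_const_one ℝ G hG.1.isSelfAdjoint, cfc_id' ℝ G hG.1.isSelfAdjoint]
  have hBcfc : hGI.sqrt = cfc (fun x : ℝ => Real.sqrt (1 - x)) G := by
    have h1 : hGI.sqrt = cfc Real.sqrt (1 - G) := sqrt_eq_cfc_aux _ hGI
    rw [h1, ← h2, ← cfc_comp Real.sqrt (fun x : ℝ => 1 - x) G hG.1.isSelfAdjoint]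
    rfl
  rw [hAcfc, hBcfc]
  exact (cfc_commute_cfc _ _ G).eq

/-- Naimark dilation of the POVM `E_i = √G Π_i √G`, `E_0 = I − G` obtained
from a PVM `{Π_i}_{i=1}^n` and `0 ⪯ G ⪯ I`.  The index `none` plays the role of `i = 0`
and `some i` the role of `i ∈ {1,…,n}`. -/
theorem stmt0 {m n : ℕ} (P : Fin n → Matrix (Fin m) (Fin m) ℂ)
    (hproj : ∀ i, P i * P i = P i) (hherm : ∀ i, (P i).IsHermitian)
    (hsum : ∑ i, P i = 1)
    (G : Matrix (Fin m) (Fin m) ℂ) (hG : G.PosSemidef) (hGI : (1 - G).PosSemidef)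
    (Phat : Option (Fin n) → Matrix (Fin m ⊕ Fin m) (Fin m ⊕ Fin m) ℂ)
    (hPhat0 : Phat none =
      Matrix.fromBlocks (1 - G) (hG.sqrt * hGI.sqrt) (hG.sqrt * hGI.sqrt) G)
    (hPhatS : ∀ i, Phat (some i) =
      Matrix.fromBlocks (hG.sqrt * P i * hG.sqrt) (-(hG.sqrt * P i * hGI.sqrt))
        (-(hGI.sqrt * P i * hG.sqrt)) (hGI.sqrt * P i * hGI.sqrt)) :
    (∀ o, Phat o * Phat o = Phat o ∧ (Phat o).IsHermitian) ∧
      (∑ o, Phat o = 1) ∧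
      (∀ i, (Phat (some i)).toBlocks₁₁ = hG.sqrt * P i * hG.sqrt) ∧
      (Phat none).toBlocks₁₁ = 1 - G := by
  classical
  set A := hG.sqrt with hAdef
  set B := hGI.sqrt with hBdef
  have hAH : Aᴴ = A := sqrt_herm_aux G hG
  have hBH : Bᴴ = B := sqrt_herm_aux _ hGI
  have hA2 : A * A = G := sqrt_mul_self_aux G hG
  have hB2 : B * B = 1 - G := sqrt_mul_self_aux _ hGI
  have hAB : A * B = B * A := sqrt_comm_aux G hG hGI
  set V : Matrix (Fin m ⊕ Fin m) (Fin m ⊕ Fin m) ℂ :=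
    Matrix.fromBlocks A (-B) (-B) (-A) with hVdef
  have hVH : Vᴴ = V := by
    rw [hVdef, Matrix.fromBlocks_conjTranspose]
    simp [hAH, hBH]
  have hV2 : V * V = 1 := by
    rw [hVdef, Matrix.fromBlocks_multiply]
    have h11 : A * A + -B * -B = 1 := by rw [neg_mul_neg, hA2, hB2]; abel
    have h12 : A * -B + -B * -A = 0 := by rw [neg_mul_neg, mul_neg, ← hAB]; abel
    have h21 : -B * A + -A * -B = 0 := by rw [neg_mul_neg, neg_mul, hAB]; abel
    have h22 : -B * -B + -A * -A = 1 := by rw [neg_mul_neg, neg_mul_neg, hA2, hB2]; abel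
    rw [h11, h12, h21, h22, Matrix.fromBlocks_one]
  set Q : Option (Fin n) → Matrix (Fin m ⊕ Fin m) (Fin m ⊕ Fin m) ℂ := fun o =>
    o.elim (Matrix.fromBlocks 0 0 0 1) (fun i => Matrix.fromBlocks (P i) 0 0 0) with hQdef
  have hPQ : ∀ o, Phat o = V * Q o * V := by
    intro o
    cases o with
    | none =>
      rw [hPhat0]
      show _ = V * Matrix.fromBlocks 0 0 0 1 * V
      rw [hVdef, Matrix.fromBlocks_multiply, Matrix.fromBlocks_multiply]
      rw [Matrix.fromBlocks_inj]
      refine ⟨?_, ?_, ?_, ?_⟩ <;> simp [hA2, hB2, hAB, neg_mul_neg, mul_assoc]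
    | some i =>
      rw [hPhatS i]
      show _ = V * Matrix.fromBlocks (P i) 0 0 0 * V
      rw [hVdef, Matrix.fromBlocks_multiply, Matrix.fromBlocks_multiply]
      rw [Matrix.fromBlocks_inj]
      refine ⟨?_, ?_, ?_, ?_⟩ <;> simp [mul_assoc]
  have hQ2 : ∀ o, Q o * Q o = Q o := by
    intro o
    cases o with
    | none => simp [hQdef, Matrix.fromBlocks_multiply]
    | some i => simp [hQdef, Matrix.fromBlocks_multiply, hproj i]
  have hQH : ∀ o, (Q o)ᴴ = Q o := by
    intro o
    cases o with
    | none => simp [hQdef, Matrix.fromBlocks_conjTranspose]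
    | some i => simp [hQdef, Matrix.fromBlocks_conjTranspose, (hherm i).eq]
  have hQsum : ∑ o, Q o = 1 := by
    rw [Fintype.sum_option]
    have hs : ∑ i, Q (some i) = Matrix.fromBlocks 1 0 0 0 := by
      rw [← hsum]
      ext (i | i) (j | j) <;> simp [hQdef, Matrix.sum_apply]
    rw [hs]
    show Matrix.fromBlocks 0 0 0 1 + Matrix.fromBlocks 1 0 0 0 = 1
    rw [Matrix.fromBlocks_add, ← Matrix.fromBlocks_one]
    congr 1 <;> simp
  refine ⟨fun o => ⟨?_, ?_⟩, ?_, fun i => ?_, ?_⟩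
  · rw [hPQ o]
    simp only [mul_assoc]
    rw [← mul_assoc V V, hV2, one_mul, ← mul_assoc (Q o) (Q o), hQ2 o]
  · rw [hPQ o]
    show (V * Q o * V)ᴴ = V * Q o * V
    rw [Matrix.conjTranspose_mul, Matrix.conjTranspose_mul, hVH, hQH o, mul_assoc]
  · calc ∑ o, Phat o = ∑ o, V * Q o * V := Finset.sum_congr rfl fun o _ => hPQ o
      _ = V * (∑ o, Q o) * V := by rw [Finset.mul_sum, Finset.sum_mul]
      _ = 1 := by rw [hQsum, mul_one, hV2]
  · rw [hPhatS i, Matrix.toBlocks_fromBlocks₁₁]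
  · rw [hPhat0, Matrix.toBlocks_fromBlocks₁₁]
end

section
/- Let d ≥ 1, n ≥ 1, let λ ⊢ n−1 be a partition with len(λ) ≤ d, and let a ∈ AC_d(λ). Then n · f^λ · m_{λ∪a} = (d + cont(a)) · f^{λ∪a} · m_λ; equivalently, n · (f^λ / m_λ) · (m_{λ∪a} / f^{λ∪a}) = d + cont(a). -/
open scoped BigOperators

noncomputable section

attribute [local instance] Classical.propDecidable

/-- A cell of a Young diagram, 0-based: `(i, j)` is row `i`, column `j`. -/
abbrev Cell : Type := ℕ × ℕ

/-- The content of a cell `(i,j)` is `j - i`. -/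
def cont (u : Cell) : ℤ := (u.2 : ℤ) - (u.1 : ℤ)

/-- A finite set of cells is a Young diagram if it is a lower set. -/
def IsYD (μ : Finset Cell) : Prop := IsLowerSet (μ : Set Cell)

/-- A cell `a ∉ μ` is addable if inserting it yields a Young diagram. -/
def Addable (μ : Finset Cell) (a : Cell) : Prop := a ∉ μ ∧ IsYD (insert a μ)

/-- A cell `c ∈ μ` is removable if deleting it yields a Young diagram. -/
def Removable (μ : Finset Cell) (c : Cell) : Prop := c ∈ μ ∧ IsYD (μ.erase c)

/-- The finset of addable cells of `μ` (they all lie in a `(|μ|+1) × (|μ|+1)` box). -/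
def AC (μ : Finset Cell) : Finset Cell :=
  ((Finset.range (μ.card + 1)) ×ˢ (Finset.range (μ.card + 1))).filter (fun a => Addable μ a)

/-- The finset of removable cells of `μ`. -/
def RC (μ : Finset Cell) : Finset Cell := μ.filter (fun c => Removable μ c)

/-- Length of the `i`-th row (0-based), i.e. the part `μ_{i+1}`. -/
def rowLen (μ : Finset Cell) (i : ℕ) : ℕ := (μ.filter (fun c => c.1 = i)).card

/-- The number of (nonempty) rows of `μ`. -/
def len (μ : Finset Cell) : ℕ := (μ.filter (fun c => c.2 = 0)).card

/-- Addable cells whose addition keeps at most `d` rows. -/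
def ACd (d : ℕ) (μ : Finset Cell) : Finset Cell :=
  (AC μ).filter (fun a => len (insert a μ) ≤ d)

/-- The number of standard Young tableaux of shape `μ`, as the number of saturated chains
`∅ = T 0 ⊂ T 1 ⊂ ⋯ ⊂ T |μ| = μ` of Young diagrams with `|T k| = k`. -/
def sytCount (μ : Finset Cell) : ℕ :=
  Nat.card {T : ℕ → Finset Cell //
    (∀ k, IsYD (T k)) ∧ (∀ k, (T k).card = min k μ.card) ∧
    (∀ k, T k ⊆ T (k + 1)) ∧ (∀ k, μ.card ≤ k → T k = μ)}

/-- Weyl dimension formula for a weakly decreasing integer vector `Λ` of length `d`. -/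
def weylDimVec (d : ℕ) (Λ : ℕ → ℤ) : ℚ :=
  ∏ p ∈ ((Finset.range d) ×ˢ (Finset.range d)).filter (fun p => p.1 < p.2),
    (((Λ p.1 : ℚ) - (Λ p.2 : ℚ) + (p.2 : ℚ) - (p.1 : ℚ)) / ((p.2 : ℚ) - (p.1 : ℚ)))

/-- Weyl dimension `m_μ` of the irrep of `U(d)` labelled by a partition `μ` with at most
`d` rows (padded with zeros). -/
def weylDim (d : ℕ) (μ : Finset Cell) : ℚ := weylDimVec d (fun i => (rowLen μ i : ℤ))

/-- All Young diagrams with `k` cells (they fit in a `k × k` box). -/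
def YDs (k : ℕ) : Finset (Finset Cell) :=
  ((Finset.range k ×ˢ Finset.range k).powerset).filter (fun μ => IsYD μ ∧ μ.card = k)

end

noncomputable section
attribute [local instance] Classical.propDecidable

lemma lowerFinset_mem_iff {s : Finset ℕ} (hs : ∀ ⦃a b : ℕ⦄, a ≤ b → b ∈ s → a ∈ s) {x : ℕ} :
    x ∈ s ↔ x < s.card := by
  constructor
  · intro hx
    have h : Finset.range (x + 1) ⊆ s := fun y hy =>
      hs (Nat.lt_succ_iff.mp (Finset.mem_range.mp hy)) hx
    have := Finset.card_le_card h
    simpa [Nat.succ_le_iff] using this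
  · intro hx
    by_contra hxs
    have h : s ⊆ Finset.range x := by
      intro y hy
      rw [Finset.mem_range]
      by_contra hxy
      exact hxs (hs (le_of_not_gt hxy) hy)
    have := Finset.card_le_card h
    simp at this
    omega

lemma yd_mem_mono {μ : Finset Cell} (h : IsYD μ) {u v : Cell} (huv : u ≤ v) (hv : v ∈ μ) :
    u ∈ μ := h huv hv

lemma mem_iff_lt_rowLen {μ : Finset Cell} (h : IsYD μ) {i j : ℕ} :
    (i, j) ∈ μ ↔ j < rowLen μ i := by
  classical
  set R := μ.filter (fun c => c.1 = i) with hR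
  set J := R.image Prod.snd with hJ
  have hcard : J.card = R.card := Finset.card_image_of_injOn (by
    rintro ⟨a, b⟩ hu ⟨a', b'⟩ hv huv
    simp only [hR, Finset.mem_coe, Finset.mem_filter] at hu hv
    simp only at huv
    simp [hu.2, hv.2, huv])
  have hmemJ : ∀ x : ℕ, x ∈ J ↔ (i, x) ∈ μ := by
    intro x
    simp only [hJ, hR, Finset.mem_image, Finset.mem_filter]
    constructor
    · rintro ⟨⟨a, b⟩, ⟨hm, ha⟩, rfl⟩
      simp only at ha
      subst ha; exact hm
    · intro hm; exact ⟨(i, x), ⟨hm, rfl⟩, rfl⟩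
  have hlow : ∀ ⦃a b : ℕ⦄, a ≤ b → b ∈ J → a ∈ J := by
    intro a b hab hb
    rw [hmemJ] at hb ⊢
    exact h (Prod.mk_le_mk.mpr ⟨le_rfl, hab⟩) hb
  rw [← hmemJ, lowerFinset_mem_iff hlow, hcard]
  rfl

lemma mem_firstcol_iff {μ : Finset Cell} (h : IsYD μ) {i : ℕ} :
    (i, 0) ∈ μ ↔ i < len μ := by
  classical
  set R := μ.filter (fun c => c.2 = 0) with hR
  set J := R.image Prod.fst with hJ
  have hcard : J.card = R.card := Finset.card_image_of_injOn (by
    rintro ⟨a, b⟩ hu ⟨a', b'⟩ hv huv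
    simp only [hR, Finset.mem_coe, Finset.mem_filter] at hu hv
    simp only at huv
    simp [hu.2, hv.2, huv])
  have hmemJ : ∀ x : ℕ, x ∈ J ↔ (x, 0) ∈ μ := by
    intro x
    simp only [hJ, hR, Finset.mem_image, Finset.mem_filter]
    constructor
    · rintro ⟨⟨a, b⟩, ⟨hm, ha⟩, rfl⟩
      simp only at ha
      subst ha; exact hm
    · intro hm; exact ⟨(x, 0), ⟨hm, rfl⟩, rfl⟩
  have hlow : ∀ ⦃a b : ℕ⦄, a ≤ b → b ∈ J → a ∈ J := by
    intro a b hab hb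
    rw [hmemJ] at hb ⊢
    exact h (Prod.mk_le_mk.mpr ⟨hab, le_rfl⟩) hb
  rw [← hmemJ, lowerFinset_mem_iff hlow, hcard]
  rfl

lemma rowLen_anti {μ : Finset Cell} (h : IsYD μ) {i i' : ℕ} (hii : i ≤ i') :
    rowLen μ i' ≤ rowLen μ i := by
  by_contra hc
  push_neg at hc
  have : (i', rowLen μ i) ∈ μ := (mem_iff_lt_rowLen h).mpr hc
  have : (i, rowLen μ i) ∈ μ := h (Prod.mk_le_mk.mpr ⟨hii, le_rfl⟩) this
  exact lt_irrefl _ ((mem_iff_lt_rowLen h).mp this)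

lemma rowLen_pos_iff {μ : Finset Cell} (h : IsYD μ) {i : ℕ} :
    0 < rowLen μ i ↔ i < len μ := by
  rw [← mem_iff_lt_rowLen h, mem_firstcol_iff h]

lemma rowLen_eq_zero_of_le {μ : Finset Cell} (h : IsYD μ) {i : ℕ} (hi : len μ ≤ i) :
    rowLen μ i = 0 := by
  have := rowLen_pos_iff h (i := i)
  omega

lemma card_eq_sum_rowLen {μ : Finset Cell} (h : IsYD μ) {m : ℕ} (hm : len μ ≤ m) :
    μ.card = ∑ i ∈ Finset.range m, rowLen μ i := by
  classical
  apply Finset.card_eq_sum_card_fiberwise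
  intro c hc
  have h0 : (c.1, 0) ∈ μ := h (Prod.mk_le_mk.mpr ⟨le_rfl, Nat.zero_le _⟩) (by simpa using hc)
  rw [Finset.mem_coe, Finset.mem_range]
  exact lt_of_lt_of_le ((mem_firstcol_iff h).mp h0) hm
lemma rowLen_erase {μ : Finset Cell} {c : Cell} (hc : c ∈ μ) (i : ℕ) :
    rowLen (μ.erase c) i = if c.1 = i then rowLen μ i - 1 else rowLen μ i := by
  classical
  unfold rowLen
  rw [Finset.filter_erase]
  by_cases h : c.1 = i
  · rw [if_pos h]
    exact Finset.card_erase_of_mem (Finset.mem_filter.mpr ⟨hc, h⟩)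
  · rw [if_neg h]
    rw [Finset.erase_eq_of_notMem]
    intro hmem
    exact h (Finset.mem_filter.mp hmem).2

lemma removable_spec {μ : Finset Cell} (h : IsYD μ) {c : Cell} (hc : Removable μ c) :
    c.2 = rowLen μ c.1 - 1 ∧ rowLen μ (c.1 + 1) < rowLen μ c.1 := by
  obtain ⟨hmem, hYDe⟩ := hc
  obtain ⟨r, q⟩ := c
  have hq : q < rowLen μ r := (mem_iff_lt_rowLen h).mp hmem
  have hre : rowLen (μ.erase (r, q)) r = rowLen μ r - 1 := by
    rw [rowLen_erase hmem]; simp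
  have hnot : ¬ ((r, q) ∈ μ.erase (r, q)) := Finset.notMem_erase _ _
  rw [mem_iff_lt_rowLen hYDe, hre] at hnot
  have hq2 : q = rowLen μ r - 1 := by omega
  refine ⟨hq2, ?_⟩
  have h1 : rowLen (μ.erase (r, q)) (r + 1) ≤ rowLen (μ.erase (r, q)) r :=
    rowLen_anti hYDe (Nat.le_succ r)
  have h2 : rowLen (μ.erase (r, q)) (r + 1) = rowLen μ (r + 1) := by
    rw [rowLen_erase hmem]; simp
  show rowLen μ (r + 1) < rowLen μ r
  omega

lemma removable_of_row {μ : Finset Cell} (h : IsYD μ) {r : ℕ}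
    (h1 : rowLen μ (r + 1) < rowLen μ r) :
    Removable μ (r, rowLen μ r - 1) := by
  have hpos : 0 < rowLen μ r := by omega
  have hmem : (r, rowLen μ r - 1) ∈ μ := (mem_iff_lt_rowLen h).mpr (by omega)
  refine ⟨hmem, ?_⟩
  intro u v hvu hu
  obtain ⟨i, j⟩ := u
  simp only [Finset.coe_erase, Set.mem_diff, Finset.mem_coe, Set.mem_singleton_iff] at hu ⊢
  obtain ⟨huμ, huc⟩ := hu
  refine ⟨h hvu huμ, ?_⟩
  intro heq
  rw [heq] at hvu
  have hvu' := Prod.mk_le_mk.mp hvu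
  obtain ⟨hri, hqj⟩ := hvu'
  have hj : j < rowLen μ i := (mem_iff_lt_rowLen h).mp huμ
  have hir : rowLen μ i ≤ rowLen μ r := rowLen_anti h hri
  have hjq : j = rowLen μ r - 1 := by omega
  rcases Nat.eq_or_lt_of_le hri with rfl | hlt
  · exact huc (by simp [hjq])
  · have : rowLen μ i ≤ rowLen μ (r + 1) := rowLen_anti h hlt
    omega

lemma mem_RC_iff {μ : Finset Cell} {c : Cell} : c ∈ RC μ ↔ Removable μ c := by
  unfold RC
  simp only [Finset.mem_filter]
  exact ⟨fun h => h.2, fun h => ⟨h.1, h⟩⟩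

lemma RC_eq_image {μ : Finset Cell} (h : IsYD μ) {d : ℕ} (hlen : len μ ≤ d) :
    RC μ = ((Finset.range d).filter (fun r => rowLen μ (r + 1) < rowLen μ r)).image
      (fun r => (r, rowLen μ r - 1)) := by
  ext c
  rw [mem_RC_iff]
  simp only [Finset.mem_image, Finset.mem_filter, Finset.mem_range]
  constructor
  · intro hc
    obtain ⟨h1, h2⟩ := removable_spec h hc
    refine ⟨c.1, ⟨?_, h2⟩, ?_⟩
    · have : 0 < rowLen μ c.1 := by omega
      exact lt_of_lt_of_le ((rowLen_pos_iff h).mp this) hlen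
    · exact Prod.ext rfl h1.symm
  · rintro ⟨r, ⟨_, h2⟩, rfl⟩
    exact removable_of_row h h2
def ChainP (μ : Finset Cell) (T : ℕ → Finset Cell) : Prop :=
  (∀ k, IsYD (T k)) ∧ (∀ k, (T k).card = min k μ.card) ∧
    (∀ k, T k ⊆ T (k + 1)) ∧ (∀ k, μ.card ≤ k → T k = μ)

lemma sytCount_eq (μ : Finset Cell) : sytCount μ = Nat.card {T // ChainP μ T} := rfl

lemma chain_mono {T : ℕ → Finset Cell} (hT : ∀ k, T k ⊆ T (k + 1)) {k l : ℕ} (hkl : k ≤ l) :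
    T k ⊆ T l := by
  induction l with
  | zero =>
    have : k = 0 := Nat.le_zero.mp hkl
    simp [this]
  | succ l ih =>
    rcases Nat.lt_or_ge k (l + 1) with hlt | hge
    · exact (ih (Nat.lt_succ_iff.mp hlt)).trans (hT l)
    · have : k = l + 1 := le_antisymm hkl hge
      simp [this]

lemma chain_subset {μ : Finset Cell} {T : ℕ → Finset Cell} (hT : ChainP μ T) (k : ℕ) :
    T k ⊆ μ := by
  have h := chain_mono hT.2.2.1 (Nat.le_add_left k μ.card)
  rwa [hT.2.2.2 (μ.card + k) (Nat.le_add_right _ _)] at h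

lemma chain_finite (μ : Finset Cell) : Finite {T // ChainP μ T} := by
  classical
  let F : {T // ChainP μ T} → (Fin (μ.card + 1) → {s // s ∈ μ.powerset}) :=
    fun T i => ⟨T.1 i, Finset.mem_powerset.mpr (chain_subset T.2 i)⟩
  have hF : Function.Injective F := by
    rintro ⟨T, hT⟩ ⟨S, hS⟩ hTS
    apply Subtype.ext
    funext k
    rcases Nat.lt_or_ge k (μ.card + 1) with hlt | hge
    · have := congrFun hTS ⟨k, hlt⟩
      simpa [F] using this
    · show T k = S k
      rw [hT.2.2.2 k (by omega), hS.2.2.2 k (by omega)]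
  exact Finite.of_injective F hF

lemma sytCount_empty : sytCount (∅ : Finset Cell) = 1 := by
  rw [sytCount_eq]
  have hYDe : IsYD (∅ : Finset Cell) := by
    unfold IsYD
    simp only [Finset.coe_empty]
    exact isLowerSet_empty
  have he : ChainP (∅ : Finset Cell) (fun _ => ∅) := by
    refine ⟨fun _ => hYDe, fun k => by simp, fun _ => subset_rfl, fun _ _ => rfl⟩
  have huniq : ∀ T : {T // ChainP (∅ : Finset Cell) T}, T = ⟨fun _ => ∅, he⟩ := by
    rintro ⟨T, hT⟩
    apply Subtype.ext
    funext k
    have h := hT.2.1 k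
    simp only [Finset.card_empty, Nat.min_zero] at h
    exact Finset.card_eq_zero.mp h
  haveI : Nonempty {T // ChainP (∅ : Finset Cell) T} := ⟨⟨fun _ => ∅, he⟩⟩
  haveI : Subsingleton {T // ChainP (∅ : Finset Cell) T} :=
    ⟨fun a b => (huniq a).trans (huniq b).symm⟩
  exact Nat.card_unique

lemma bw_chain {μ : Finset Cell} (hYD : IsYD μ) (hne : μ.Nonempty) {c : Cell}
    (hc : Removable μ c) {S : ℕ → Finset Cell} (hS : ChainP (μ.erase c) S) :
    ChainP μ (fun k => if μ.card ≤ k then μ else S k) := by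
  have hcμ : c ∈ μ := hc.1
  have hce : (μ.erase c).card = μ.card - 1 := Finset.card_erase_of_mem hcμ
  have hn1 : 1 ≤ μ.card := Finset.card_pos.mpr hne
  obtain ⟨hS1, hS2, hS3, hS4⟩ := hS
  refine ⟨?_, ?_, ?_, ?_⟩
  · intro k
    by_cases hk : μ.card ≤ k
    · simpa [hk] using hYD
    · simpa [hk] using hS1 k
  · intro k
    by_cases hk : μ.card ≤ k
    · simp only [if_pos hk]
      omega
    · simp only [if_neg hk]
      rw [hS2 k, hce]
      omega
  · intro k
    by_cases hk1 : μ.card ≤ k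
    · simp [if_pos hk1, if_pos (show μ.card ≤ k + 1 by omega)]
    · by_cases hk2 : μ.card ≤ k + 1
      · simp only [if_neg hk1, if_pos hk2]
        rw [hS4 k (by omega)]
        exact Finset.erase_subset _ _
      · simp only [if_neg hk1, if_neg hk2]
        exact hS3 k
  · intro k hk
    simp [if_pos hk]

lemma fw_spec {μ : Finset Cell} (hne : μ.Nonempty) {T : ℕ → Finset Cell}
    (hT : ChainP μ T) :
    ∃ c : Cell, Removable μ c ∧ μ.erase c = T (μ.card - 1) ∧
      ChainP (μ.erase c) (fun k => T (min k (μ.card - 1))) := by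
  have hn1 : 1 ≤ μ.card := Finset.card_pos.mpr hne
  obtain ⟨hT1, hT2, hT3, hT4⟩ := hT
  set n := μ.card with hn
  have hνsub : T (n - 1) ⊆ μ := chain_subset ⟨hT1, hT2, hT3, hT4⟩ (n - 1)
  have hνcard : (T (n - 1)).card = n - 1 := by rw [hT2]; omega
  have hsd : (μ \ T (n - 1)).card = 1 := by
    rw [Finset.card_sdiff_of_subset hνsub, hνcard]
    omega
  obtain ⟨c, hcs⟩ := Finset.card_eq_one.mp hsd
  have hcμ : c ∈ μ := by
    have : c ∈ μ \ T (n - 1) := by rw [hcs]; exact Finset.mem_singleton_self c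
    exact (Finset.mem_sdiff.mp this).1
  have herase : μ.erase c = T (n - 1) := by
    rw [Finset.erase_eq, ← hcs, sdiff_sdiff_eq_self hνsub]
  have hrem : Removable μ c := ⟨hcμ, by rw [herase]; exact hT1 _⟩
  refine ⟨c, hrem, herase, ?_, ?_, ?_, ?_⟩
  · intro k
    exact hT1 _
  · intro k
    rw [hT2, Finset.card_erase_of_mem hcμ, ← hn]
    omega
  · intro k
    exact chain_mono hT3 (min_le_min (Nat.le_succ k) le_rfl)
  · intro k hk
    rw [Finset.card_erase_of_mem hcμ, ← hn] at hk
    show T (min k (n - 1)) = μ.erase c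
    rw [min_eq_right hk]
    exact herase.symm

lemma sytCount_branch {μ : Finset Cell} (hYD : IsYD μ) (hne : μ.Nonempty) :
    sytCount μ = ∑ c ∈ RC μ, sytCount (μ.erase c) := by
  classical
  have hn1 : 1 ≤ μ.card := Finset.card_pos.mpr hne
  set n := μ.card with hn
  let Y := Σ c : {c // c ∈ RC μ}, {T // ChainP (μ.erase c.1) T}
  let Ψ : Y → {T // ChainP μ T} := fun p =>
    ⟨fun k => if n ≤ k then μ else p.2.1 k,
      bw_chain hYD hne (mem_RC_iff.mp p.1.2) p.2.2⟩
  have hΨbij : Function.Bijective Ψ := by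
    constructor
    · rintro ⟨⟨c, hc⟩, ⟨S, hS⟩⟩ ⟨⟨c', hc'⟩, ⟨S', hS'⟩⟩ hEq
      have hfun := congrArg Subtype.val hEq
      simp only [Ψ] at hfun
      have hval : ∀ k, (if n ≤ k then μ else S k) = (if n ≤ k then μ else S' k) :=
        fun k => congrFun hfun k
      have hcc : μ.erase c = μ.erase c' := by
        have h1 := hval (n - 1)
        rw [if_neg (by omega), if_neg (by omega)] at h1
        rw [hS.2.2.2 (n - 1) (le_of_eq (Finset.card_erase_of_mem (mem_RC_iff.mp hc).1)),
          hS'.2.2.2 (n - 1) (le_of_eq (Finset.card_erase_of_mem (mem_RC_iff.mp hc').1))] at h1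
        exact h1
      have hcceq : c = c' :=
        (Finset.erase_inj μ (mem_RC_iff.mp hc).1).mp hcc
      subst hcceq
      have hSS : S = S' := by
        funext k
        by_cases hk : n ≤ k
        · rw [hS.2.2.2 k (by rw [Finset.card_erase_of_mem (mem_RC_iff.mp hc).1]; omega),
            hS'.2.2.2 k (by rw [Finset.card_erase_of_mem (mem_RC_iff.mp hc).1]; omega)]
        · have := hval k
          rwa [if_neg hk, if_neg hk] at this
      subst hSS
      rfl
    · rintro ⟨T, hT⟩
      obtain ⟨c, hrem, herase, hchain⟩ := fw_spec hne hT
      refine ⟨⟨⟨c, mem_RC_iff.mpr hrem⟩, ⟨fun k => T (min k (n - 1)), hchain⟩⟩, ?_⟩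
      apply Subtype.ext
      funext k
      simp only [Ψ]
      by_cases hk : n ≤ k
      · rw [if_pos hk, hT.2.2.2 k hk]
      · rw [if_neg hk]
        congr 1
        omega
  haveI h1 : ∀ c : {c // c ∈ RC μ}, Finite {T // ChainP (μ.erase c.1) T} :=
    fun c => chain_finite _
  haveI h2 : Finite {T // ChainP μ T} := chain_finite μ
  haveI : ∀ c : {c // c ∈ RC μ}, Fintype {T // ChainP (μ.erase c.1) T} :=
    fun c => Fintype.ofFinite _
  haveI : Fintype {T // ChainP μ T} := Fintype.ofFinite _
  have hcard : Nat.card Y = Nat.card {T // ChainP μ T} :=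
    Nat.card_eq_of_bijective Ψ hΨbij
  rw [sytCount_eq, ← hcard]
  have : Nat.card Y = ∑ c : {c // c ∈ RC μ}, Nat.card {T // ChainP (μ.erase c.1) T} := by
    rw [Nat.card_eq_fintype_card, Fintype.card_sigma]
    congr 1
    funext c
    rw [Nat.card_eq_fintype_card]
  rw [this]
  rw [← Finset.sum_coe_sort (RC μ) (fun c => sytCount (μ.erase c))]
  congr 1
open Polynomial in
lemma coeff_X_sub_C_mul (c : ℚ) (P : ℚ[X]) {m : ℕ} (hm : 1 ≤ m) :
    ((X - C c) * P).coeff m = P.coeff (m - 1) - c * P.coeff m := by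
  obtain ⟨m', rfl⟩ : ∃ m', m = m' + 1 := ⟨m - 1, by omega⟩
  rw [sub_mul, Polynomial.coeff_sub, Polynomial.coeff_X_mul, Polynomial.coeff_C_mul]
  simp

open Polynomial in
lemma prodXsubC_natDegree (s : Finset ℕ) (a : ℕ → ℚ) :
    (∏ i ∈ s, (X - C (a i))).natDegree = s.card := by
  rw [Polynomial.natDegree_prod _ _ (fun i _ => Polynomial.X_sub_C_ne_zero (a i))]
  simp

open Polynomial in
lemma prodXsubC_monic (s : Finset ℕ) (a : ℕ → ℚ) : (∏ i ∈ s, (X - C (a i))).Monic :=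
  Polynomial.monic_prod_of_monic _ _ fun i _ => Polynomial.monic_X_sub_C (a i)

open Polynomial in
lemma prodXsubC_coeff_top (s : Finset ℕ) (a : ℕ → ℚ) :
    (∏ i ∈ s, (X - C (a i))).coeff s.card = 1 := by
  rw [← prodXsubC_natDegree s a, Polynomial.coeff_natDegree]
  exact (prodXsubC_monic s a).leadingCoeff

open Polynomial in
lemma prodXsubC_coeff_zero_of_lt (s : Finset ℕ) (a : ℕ → ℚ) {m : ℕ} (hm : s.card < m) :
    (∏ i ∈ s, (X - C (a i))).coeff m = 0 :=
  Polynomial.coeff_eq_zero_of_natDegree_lt (by rw [prodXsubC_natDegree]; exact hm)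

open Polynomial in
lemma prodXsubC_coeff_sub_two (s : Finset ℕ) (a : ℕ → ℚ) (hs : 2 ≤ s.card) :
    (∏ i ∈ s, (X - C (a i))).coeff (s.card - 2) =
      ((∑ i ∈ s, a i) ^ 2 - ∑ i ∈ s, (a i) ^ 2) / 2 := by
  classical
  induction s using Finset.induction_on with
  | empty => simp at hs
  | insert i s hi ih =>
    rw [Finset.prod_insert hi, Finset.card_insert_of_notMem hi, Finset.sum_insert hi,
      Finset.sum_insert hi]
    rw [Finset.card_insert_of_notMem hi] at hs
    by_cases h2 : 2 ≤ s.card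
    · rw [coeff_X_sub_C_mul _ _ (show 1 ≤ s.card + 1 - 2 by omega)]
      have e1 : s.card + 1 - 2 - 1 = s.card - 2 := by omega
      have e2 : s.card + 1 - 2 = s.card - 1 := by omega
      rw [e1, e2, ih h2, Polynomial.prod_X_sub_C_coeff_card_pred s a (by omega)]
      ring
    · have hc1 : s.card = 1 := by omega
      obtain ⟨j, rfl⟩ := Finset.card_eq_one.mp hc1
      simp only [Finset.prod_singleton, Finset.sum_singleton]
      rw [show ({j} : Finset ℕ).card + 1 - 2 = 0 by rw [hc1], Polynomial.mul_coeff_zero]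
      simp only [Polynomial.coeff_sub, Polynomial.coeff_X_zero, Polynomial.coeff_C_zero]
      ring
open Polynomial in
lemma key_sum_aux {d : ℕ} (hd : 2 ≤ d) (x : ℕ → ℚ) (hinj : Set.InjOn x (Finset.range d)) :
    ∑ i ∈ Finset.range d, x i * ∏ j ∈ (Finset.range d).erase i, ((x i - x j - 1) / (x i - x j)) =
      (∑ i ∈ Finset.range d, x i) - (d : ℚ) * ((d : ℚ) - 1) / 2 := by
  classical
  set s := Finset.range d with hs
  have hcard : s.card = d := Finset.card_range d
  set A := ∏ j ∈ s, (X - C (x j + 1)) with hA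
  set B := ∏ j ∈ s, (X - C (x j)) with hB
  set Q := (X : ℚ[X]) * A - (X - C (d : ℚ)) * B with hQ
  set S1 := ∑ i ∈ s, x i with hS1
  set S2 := ∑ i ∈ s, (x i) ^ 2 with hS2
  have hsumA : ∑ i ∈ s, (x i + 1) = S1 + d := by
    rw [Finset.sum_add_distrib, Finset.sum_const, hcard, hS1]
    simp
  have hsumA2 : ∑ i ∈ s, (x i + 1) ^ 2 = S2 + 2 * S1 + d := by
    have h : ∀ i ∈ s, (x i + 1) ^ 2 = (x i) ^ 2 + (2 * x i + 1) := fun i _ => by ring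
    rw [Finset.sum_congr rfl h, Finset.sum_add_distrib, Finset.sum_add_distrib,
      ← Finset.mul_sum, Finset.sum_const, hcard, hS1, hS2]
    simp
    ring
  have hA1 : A.coeff (d - 1) = -(S1 + d) := by
    rw [hA]
    have h := Polynomial.prod_X_sub_C_coeff_card_pred s (fun j => x j + 1) (by omega)
    rw [hcard] at h
    rw [h, hsumA]
  have hB1 : B.coeff (d - 1) = -S1 := by
    rw [hB]
    have h := Polynomial.prod_X_sub_C_coeff_card_pred s x (by omega)
    rw [hcard] at h
    rw [h, hS1]
  have hA2 : A.coeff (d - 2) = ((S1 + d) ^ 2 - (S2 + 2 * S1 + d)) / 2 := by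
    rw [hA]
    have h := prodXsubC_coeff_sub_two s (fun j => x j + 1) (by omega)
    rw [hcard] at h
    rw [h, hsumA, hsumA2]
  have hB2 : B.coeff (d - 2) = (S1 ^ 2 - S2) / 2 := by
    rw [hB]
    have h := prodXsubC_coeff_sub_two s x (by omega)
    rw [hcard] at h
    rw [h, hS1, hS2]
  have hAtop : A.coeff d = 1 := by
    rw [hA, ← hcard]
    exact prodXsubC_coeff_top s _
  have hBtop : B.coeff d = 1 := by
    rw [hB, ← hcard]
    exact prodXsubC_coeff_top s _
  have hAabove : ∀ m : ℕ, d < m → A.coeff m = 0 := by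
    intro m hm
    rw [hA]
    exact prodXsubC_coeff_zero_of_lt s _ (by omega)
  have hBabove : ∀ m : ℕ, d < m → B.coeff m = 0 := by
    intro m hm
    rw [hB]
    exact prodXsubC_coeff_zero_of_lt s _ (by omega)
  have hXA : ∀ m : ℕ, 1 ≤ m → ((X : ℚ[X]) * A).coeff m = A.coeff (m - 1) := by
    intro m hm
    obtain ⟨m', rfl⟩ : ∃ m', m = m' + 1 := ⟨m - 1, by omega⟩
    rw [Polynomial.coeff_X_mul]
    simp
  have hQcoeff : ∀ m : ℕ, 1 ≤ m →
      Q.coeff m = A.coeff (m - 1) - (B.coeff (m - 1) - (d : ℚ) * B.coeff m) := by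
    intro m hm
    rw [hQ, Polynomial.coeff_sub, hXA m hm, coeff_X_sub_C_mul _ _ hm]
  have hQdeg : Q.degree < (d : ℕ) := by
    rw [Polynomial.degree_lt_iff_coeff_zero]
    intro m hm
    rw [hQcoeff m (by omega)]
    rcases eq_or_lt_of_le hm with rfl | hlt
    · rw [hA1, hB1, hBtop]
      ring
    · by_cases hm2 : m = d + 1
      · subst hm2
        rw [show d + 1 - 1 = d from by omega, hAtop, hBtop, hBabove (d + 1) (by omega)]
        ring
      · rw [hAabove (m - 1) (by omega), hBabove (m - 1) (by omega), hBabove m (by omega)]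
        ring
  have hQc : Q.coeff (d - 1) = -S1 + (d : ℚ) * ((d : ℚ) - 1) / 2 := by
    rw [hQcoeff (d - 1) (by omega), show d - 1 - 1 = d - 2 from by omega, hA2, hB2, hB1]
    ring
  have hdeg' : Q.degree < (s.card : ℕ) := by rw [hcard]; exact hQdeg
  have hinterp := Lagrange.eq_interpolate hinj hdeg'
  have hco := congrArg (fun p : ℚ[X] => p.coeff (d - 1)) hinterp
  simp only [Lagrange.interpolate_apply, Polynomial.finset_sum_coeff,
    Polynomial.coeff_C_mul] at hco
  have hbasis : ∀ i ∈ s, (Lagrange.basis s x i).coeff (d - 1) =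
      ∏ j ∈ s.erase i, (x i - x j)⁻¹ := by
    intro i hi
    have hnd : (Lagrange.basis s x i).natDegree = d - 1 := by
      rw [Lagrange.natDegree_basis hinj hi, hcard]
    rw [← hnd, Polynomial.coeff_natDegree, Lagrange.basis, Polynomial.leadingCoeff_prod]
    refine Finset.prod_congr rfl fun j hj => ?_
    rw [Lagrange.basisDivisor, Polynomial.leadingCoeff_mul, Polynomial.leadingCoeff_C,
      (Polynomial.monic_X_sub_C (x j)).leadingCoeff, mul_one]
  have heval : ∀ i ∈ s, Q.eval (x i) = -(x i * ∏ j ∈ s.erase i, (x i - x j - 1)) := by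
    intro i hi
    rw [hQ, hA, hB]
    simp only [Polynomial.eval_sub, Polynomial.eval_mul, Polynomial.eval_X, Polynomial.eval_C,
      Polynomial.eval_prod]
    have hz : ∏ j ∈ s, (x i - x j) = 0 := Finset.prod_eq_zero hi (by simp)
    rw [hz, mul_zero, sub_zero,
      ← Finset.mul_prod_erase s (fun j => x i - (x j + 1)) hi]
    have h : ∀ j ∈ s.erase i, x i - (x j + 1) = x i - x j - 1 := fun j _ => by ring
    rw [Finset.prod_congr rfl h]
    ring
  have hterm : ∀ i ∈ s, Q.eval (x i) * (Lagrange.basis s x i).coeff (d - 1) =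
      -(x i * ∏ j ∈ s.erase i, ((x i - x j - 1) / (x i - x j))) := by
    intro i hi
    rw [heval i hi, hbasis i hi]
    have h : ∏ j ∈ s.erase i, ((x i - x j - 1) / (x i - x j)) =
        (∏ j ∈ s.erase i, (x i - x j - 1)) * ∏ j ∈ s.erase i, (x i - x j)⁻¹ := by
      rw [← Finset.prod_mul_distrib]
      exact Finset.prod_congr rfl fun j _ => div_eq_mul_inv _ _
    rw [h]
    ring
  rw [Finset.sum_congr rfl hterm] at hco
  rw [Finset.sum_neg_distrib, hQc] at hco
  linarith

lemma key_sum {d : ℕ} (x : ℕ → ℚ) (hinj : Set.InjOn x (Finset.range d)) :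
    ∑ i ∈ Finset.range d, x i * ∏ j ∈ (Finset.range d).erase i, ((x i - x j - 1) / (x i - x j)) =
      (∑ i ∈ Finset.range d, x i) - (d : ℚ) * ((d : ℚ) - 1) / 2 := by
  match d with
  | 0 => simp
  | 1 => norm_num
  | (n + 2) => exact key_sum_aux (by omega) x hinj
lemma pair_ratio {d r : ℕ} (hrd : r < d) (x x' : ℕ → ℚ)
    (hx'r : x' r = x r - 1) (hx' : ∀ i, i ≠ r → x' i = x i) :
    (∏ p ∈ ((Finset.range d) ×ˢ (Finset.range d)).filter (fun p => p.1 < p.2),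
        (x' p.1 - x' p.2)) * ∏ j ∈ (Finset.range d).erase r, (x r - x j) =
    (∏ p ∈ ((Finset.range d) ×ˢ (Finset.range d)).filter (fun p => p.1 < p.2),
        (x p.1 - x p.2)) * ∏ j ∈ (Finset.range d).erase r, (x r - x j - 1) := by
  classical
  set P := ((Finset.range d) ×ˢ (Finset.range d)).filter (fun p => p.1 < p.2) with hP
  have himg1 : P.filter (fun p => p.2 = r) = (Finset.range r).image (fun i => (i, r)) := by
    ext ⟨i, j⟩
    simp only [hP, Finset.mem_filter, Finset.mem_product, Finset.mem_range, Finset.mem_image,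
      Prod.mk.injEq]
    constructor
    · rintro ⟨⟨⟨h1, h2⟩, h3⟩, h4⟩
      exact ⟨i, by omega, rfl, h4.symm⟩
    · rintro ⟨i', hi', rfl, rfl⟩
      refine ⟨⟨⟨by omega, by omega⟩, by omega⟩, rfl⟩
  have himg2 : (P.filter (fun p => p.2 ≠ r)).filter (fun p => p.1 = r) =
      (Finset.Ioo r d).image (fun j => (r, j)) := by
    ext ⟨i, j⟩
    simp only [hP, Finset.mem_filter, Finset.mem_product, Finset.mem_range, Finset.mem_image,
      Finset.mem_Ioo, Prod.mk.injEq]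
    constructor
    · rintro ⟨⟨⟨⟨h1, h2⟩, h3⟩, h4⟩, h5⟩
      exact ⟨j, ⟨by omega, h2⟩, h5.symm, rfl⟩
    · rintro ⟨j', hj', rfl, rfl⟩
      exact ⟨⟨⟨⟨hrd, by omega⟩, by omega⟩, by omega⟩, rfl⟩
  have hsplit : ∀ f : ℕ × ℕ → ℚ, ∏ p ∈ P, f p =
      (∏ i ∈ Finset.range r, f (i, r)) * ((∏ j ∈ Finset.Ioo r d, f (r, j)) *
        ∏ p ∈ (P.filter (fun p => p.2 ≠ r)).filter (fun p => p.1 ≠ r), f p) := by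
    intro f
    rw [← Finset.prod_filter_mul_prod_filter_not P (fun p => p.2 = r) f]
    congr 1
    · rw [himg1, Finset.prod_image (by intro a _ b _ hab; simpa using hab)]
    · rw [← Finset.prod_filter_mul_prod_filter_not (P.filter (fun p => p.2 ≠ r))
        (fun p => p.1 = r) f]
      congr 1
      rw [himg2, Finset.prod_image (by intro a _ b _ hab; simpa using hab)]
  have herase : (Finset.range d).erase r = Finset.range r ∪ Finset.Ioo r d := by
    ext i
    simp only [Finset.mem_erase, Finset.mem_range, Finset.mem_union, Finset.mem_Ioo]
    omega
  have hdisj : Disjoint (Finset.range r) (Finset.Ioo r d) := by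
    rw [Finset.disjoint_left]
    intro i hi hi'
    simp only [Finset.mem_range] at hi
    simp only [Finset.mem_Ioo] at hi'
    omega
  rw [hsplit (fun p => x' p.1 - x' p.2), hsplit (fun p => x p.1 - x p.2), herase,
    Finset.prod_union hdisj, Finset.prod_union hdisj]
  -- normalize the x'-products
  have e1 : ∏ i ∈ Finset.range r, (x' i - x' (i, r).2) = ∏ i ∈ Finset.range r, (x i - (x r - 1)) := by
    refine Finset.prod_congr rfl fun i hi => ?_
    simp only [Finset.mem_range] at hi
    rw [hx' i (by omega), hx'r]
  have e2 : ∏ j ∈ Finset.Ioo r d, (x' (r, j).1 - x' j) = ∏ j ∈ Finset.Ioo r d, (x r - x j - 1) := by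
    refine Finset.prod_congr rfl fun j hj => ?_
    simp only [Finset.mem_Ioo] at hj
    rw [hx' j (by omega), hx'r]
    ring
  have e0 : ∏ p ∈ (P.filter (fun p => p.2 ≠ r)).filter (fun p => p.1 ≠ r), (x' p.1 - x' p.2) =
      ∏ p ∈ (P.filter (fun p => p.2 ≠ r)).filter (fun p => p.1 ≠ r), (x p.1 - x p.2) := by
    refine Finset.prod_congr rfl fun p hp => ?_
    simp only [Finset.mem_filter] at hp
    rw [hx' p.1 hp.2, hx' p.2 hp.1.2]
  simp only at e1 e2 e0 ⊢
  rw [e1, e2, e0]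
  have hkey : (∏ i ∈ Finset.range r, (x i - (x r - 1))) * ∏ i ∈ Finset.range r, (x r - x i) =
      (∏ i ∈ Finset.range r, (x i - x r)) * ∏ i ∈ Finset.range r, (x r - x i - 1) := by
    rw [← Finset.prod_mul_distrib, ← Finset.prod_mul_distrib]
    exact Finset.prod_congr rfl fun i _ => by ring
  linear_combination ((∏ j ∈ Finset.Ioo r d, (x r - x j - 1)) *
    (∏ p ∈ (P.filter (fun p => p.2 ≠ r)).filter (fun p => p.1 ≠ r), (x p.1 - x p.2)) *
    (∏ j ∈ Finset.Ioo r d, (x r - x j))) * hkey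
lemma weyl_branch {d : ℕ} {μ : Finset Cell} (hYD : IsYD μ) (hlen : len μ ≤ d) :
    (μ.card : ℚ) * weylDim d μ =
      ∑ c ∈ RC μ, ((d : ℚ) + (cont c : ℚ)) * weylDim d (μ.erase c) := by
  classical
  set x : ℕ → ℚ := fun i => (rowLen μ i : ℚ) + (d : ℚ) - 1 - (i : ℚ) with hx
  set P := ((Finset.range d) ×ˢ (Finset.range d)).filter (fun p => p.1 < p.2) with hP
  set D := ∏ p ∈ P, ((p.2 : ℚ) - (p.1 : ℚ)) with hD
  set R := (Finset.range d).filter (fun r => rowLen μ (r + 1) < rowLen μ r) with hR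
  set Q : ℕ → ℚ := fun r => ∏ p ∈ P,
    ((if p.1 = r then x r - 1 else x p.1) - (if p.2 = r then x r - 1 else x p.2)) with hQ
  -- basic facts about x
  have hxgt : ∀ i j : ℕ, i < j → j < d → x j < x i := by
    intro i j hij hjd
    have hmono : rowLen μ j ≤ rowLen μ i := rowLen_anti hYD (le_of_lt hij)
    have h1 : (rowLen μ j : ℚ) ≤ (rowLen μ i : ℚ) := by exact_mod_cast hmono
    have h2 : (i : ℚ) < j := by exact_mod_cast hij
    simp only [hx]
    linarith
  have hinj : Set.InjOn x (Finset.range d) := by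
    intro i hi j hj hij
    simp only [Finset.coe_range, Set.mem_Iio] at hi hj
    by_contra hne
    rcases Nat.lt_or_ge i j with h | h
    · exact absurd hij (ne_of_gt (hxgt i j h hj))
    · exact absurd hij.symm (ne_of_gt (hxgt j i (by omega) hi))
  have hDne : D ≠ 0 := by
    rw [hD]
    apply Finset.prod_ne_zero_iff.mpr
    intro p hp
    simp only [hP, Finset.mem_filter, Finset.mem_product, Finset.mem_range] at hp
    have : (p.1 : ℚ) < (p.2 : ℚ) := by exact_mod_cast hp.2
    intro h
    linarith
  have hWμ : weylDim d μ = (∏ p ∈ P, (x p.1 - x p.2)) / D := by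
    rw [weylDim, weylDimVec, ← hP, hD, ← Finset.prod_div_distrib]
    refine Finset.prod_congr rfl fun p hp => ?_
    congr 1
    simp only [hx]
    push_cast
    ring
  -- description of weylDim of erase, for r ∈ R
  have hWe : ∀ r ∈ R, weylDim d (μ.erase (r, rowLen μ r - 1)) = Q r / D := by
    intro r hr
    simp only [hR, Finset.mem_filter, Finset.mem_range] at hr
    obtain ⟨hrd, hrow⟩ := hr
    have hcmem : (r, rowLen μ r - 1) ∈ μ := (removable_of_row hYD hrow).1
    have haux : ∀ i : ℕ, (rowLen (μ.erase (r, rowLen μ r - 1)) i : ℚ) + (d : ℚ) - 1 - (i : ℚ) =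
        (if i = r then x r - 1 else x i) := by
      intro i
      rw [rowLen_erase hcmem i]
      by_cases hir : i = r
      · subst hir
        rw [if_pos rfl, if_pos rfl]
        have h1 : 1 ≤ rowLen μ i := by omega
        rw [Nat.cast_sub h1]
        simp only [hx]
        push_cast
        ring
      · rw [if_neg (fun h => hir h.symm), if_neg hir]
    rw [weylDim, weylDimVec, ← hP, ← Finset.prod_div_distrib]
    refine Finset.prod_congr rfl fun p hp => ?_
    congr 1
    have h1 := haux p.1
    have h2 := haux p.2
    push_cast at h1 h2 ⊢
    linarith
  -- vanishing of terms off R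
  have hzero : ∀ r ∈ Finset.range d, r ∉ R → x r * Q r = 0 := by
    intro r hrd hrR
    simp only [Finset.mem_range] at hrd
    have hnotlt : ¬ rowLen μ (r + 1) < rowLen μ r := by
      intro hc
      exact hrR (by simp only [hR, Finset.mem_filter, Finset.mem_range]; exact ⟨hrd, hc⟩)
    by_cases hrd1 : r + 1 < d
    · have heq : rowLen μ (r + 1) = rowLen μ r :=
        le_antisymm (rowLen_anti hYD (Nat.le_succ r)) (not_lt.mp hnotlt)
      have hmem : ((r, r + 1) : ℕ × ℕ) ∈ P := by
        simp only [hP, Finset.mem_filter, Finset.mem_product, Finset.mem_range]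
        exact ⟨⟨by omega, hrd1⟩, by omega⟩
      have hfac : ((if ((r, r+1) : ℕ × ℕ).1 = r then x r - 1 else x ((r, r+1) : ℕ × ℕ).1) -
          (if ((r, r+1) : ℕ × ℕ).2 = r then x r - 1 else x ((r, r+1) : ℕ × ℕ).2)) = 0 := by
        simp only [if_pos rfl, if_neg (show r + 1 ≠ r by omega)]
        have hcast : (rowLen μ (r + 1) : ℚ) = (rowLen μ r : ℚ) := by exact_mod_cast heq
        simp only [hx]
        push_cast
        linarith
      have hQ0 : Q r = 0 := by
        rw [hQ]
        exact Finset.prod_eq_zero hmem hfac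
      rw [hQ0, mul_zero]
    · have hr1 : r + 1 = d := by omega
      have hℓ0 : rowLen μ r = 0 := by
        by_contra hpos
        have h0 : rowLen μ (r + 1) = 0 :=
          rowLen_eq_zero_of_le hYD (by omega)
        omega
      have hx0 : x r = 0 := by
        simp only [hx, hℓ0]
        have : (r : ℚ) = (d : ℚ) - 1 := by
          have : ((r : ℕ) : ℚ) + 1 = d := by exact_mod_cast congrArg (Nat.cast : ℕ → ℚ) hr1
          linarith
        rw [this]
        push_cast
        ring
      rw [hx0, zero_mul]
  -- the main algebraic evaluation
  have hBer : ∀ r ∈ Finset.range d, (∏ j ∈ (Finset.range d).erase r, (x r - x j)) ≠ 0 := by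
    intro r hrd
    simp only [Finset.mem_range] at hrd
    apply Finset.prod_ne_zero_iff.mpr
    intro j hj
    simp only [Finset.mem_erase, Finset.mem_range] at hj
    have hne : x r ≠ x j := by
      intro h
      have hrj : r = j := hinj (by rw [Finset.coe_range]; exact Set.mem_Iio.mpr hrd)
        (by rw [Finset.coe_range]; exact Set.mem_Iio.mpr hj.2) h
      exact hj.1 hrj.symm
    exact sub_ne_zero_of_ne hne
  have hQr : ∀ r ∈ Finset.range d, x r * Q r =
      (x r * ∏ j ∈ (Finset.range d).erase r, ((x r - x j - 1) / (x r - x j))) *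
        ∏ p ∈ P, (x p.1 - x p.2) := by
    intro r hrd
    simp only [Finset.mem_range] at hrd
    have hpr := pair_ratio hrd x (fun i => if i = r then x r - 1 else x i) (if_pos rfl)
      (fun i hi => if_neg hi)
    rw [← hP] at hpr
    have hQeq : Q r = ((∏ p ∈ P, (x p.1 - x p.2)) *
        ∏ j ∈ (Finset.range d).erase r, (x r - x j - 1)) /
        (∏ j ∈ (Finset.range d).erase r, (x r - x j)) := by
      rw [eq_div_iff (hBer r (Finset.mem_range.mpr hrd))]
      exact hpr
    rw [hQeq, Finset.prod_div_distrib]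
    field_simp
  have hsumx : ∑ i ∈ Finset.range d, x i = (μ.card : ℚ) + (d : ℚ) * ((d : ℚ) - 1) / 2 := by
    have hs1 : ∑ i ∈ Finset.range d, (rowLen μ i : ℚ) = (μ.card : ℚ) := by
      rw [card_eq_sum_rowLen hYD hlen]
      push_cast
      rfl
    have hs2 : (∑ i ∈ Finset.range d, (i : ℚ)) = (d : ℚ) * ((d : ℚ) - 1) / 2 := by
      have h2 := Finset.sum_range_id_mul_two d
      have h3 : ((∑ i ∈ Finset.range d, i : ℕ) : ℚ) * 2 = (d : ℚ) * ((d : ℚ) - 1) := by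
        have := congrArg (Nat.cast : ℕ → ℚ) h2
        push_cast at this
        rcases Nat.eq_zero_or_pos d with rfl | hd
        · simp
        · rw [Nat.cast_sub hd] at this
          push_cast at this ⊢
          linarith
      push_cast at h3 ⊢
      linarith
    have hxi : ∀ i, x i = (rowLen μ i : ℚ) + ((d : ℚ) - 1) - (i : ℚ) := fun i => by
      rw [hx]; ring
    rw [Finset.sum_congr rfl (fun i _ => hxi i), Finset.sum_sub_distrib,
      Finset.sum_add_distrib, Finset.sum_const, Finset.card_range, hs1, hs2, nsmul_eq_mul]
    ring
  have hE : ∑ r ∈ Finset.range d, x r * Q r = (μ.card : ℚ) * ∏ p ∈ P, (x p.1 - x p.2) := by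
    rw [Finset.sum_congr rfl hQr, ← Finset.sum_mul, key_sum x hinj, hsumx]
    ring
  -- assemble
  rw [RC_eq_image hYD hlen, ← hR,
    Finset.sum_image (by intro a _ b _ hab; exact congrArg Prod.fst hab)]
  have hterm : ∀ r ∈ R, ((d : ℚ) + (cont (r, rowLen μ r - 1) : ℚ)) *
      weylDim d (μ.erase (r, rowLen μ r - 1)) = (x r * Q r) / D := by
    intro r hr
    have hr' := hr
    simp only [hR, Finset.mem_filter, Finset.mem_range] at hr'
    obtain ⟨hrd, hrow⟩ := hr'
    have hcoef : (d : ℚ) + (cont (r, rowLen μ r - 1) : ℚ) = x r := by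
      unfold cont
      have h1 : 1 ≤ rowLen μ r := by omega
      simp only [hx]
      push_cast [Nat.cast_sub h1]
      ring
    rw [hcoef, hWe r hr, mul_div_assoc]
  rw [Finset.sum_congr rfl hterm, ← Finset.sum_div,
    Finset.sum_subset (Finset.filter_subset _ _) (by
      intro r hrd hrR
      exact hzero r hrd (by rw [hR]; exact hrR)), hE, hWμ]
  ring
lemma weylDim_empty (d : ℕ) : weylDim d (∅ : Finset Cell) = 1 := by
  rw [weylDim, weylDimVec]
  apply Finset.prod_eq_one
  intro p hp
  simp only [Finset.mem_filter, Finset.mem_product, Finset.mem_range] at hp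
  have h1 : rowLen (∅ : Finset Cell) p.1 = 0 := by simp [rowLen]
  have h2 : rowLen (∅ : Finset Cell) p.2 = 0 := by simp [rowLen]
  rw [h1, h2]
  have hlt : (p.1 : ℚ) < (p.2 : ℚ) := by exact_mod_cast hp.2
  have hne : (p.2 : ℚ) - (p.1 : ℚ) ≠ 0 := by intro h; linarith
  push_cast
  rw [show (0 : ℚ) - 0 + (p.2 : ℚ) - (p.1 : ℚ) = (p.2 : ℚ) - (p.1 : ℚ) from by ring]
  exact div_self hne

lemma len_erase_le {μ : Finset Cell} (c : Cell) : len (μ.erase c) ≤ len μ :=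
  Finset.card_le_card (Finset.filter_subset_filter _ (Finset.erase_subset _ _))

lemma hook_content {d : ℕ} (μ : Finset Cell) : IsYD μ → len μ ≤ d →
    (Nat.factorial μ.card : ℚ) * weylDim d μ =
      (sytCount μ : ℚ) * ∏ u ∈ μ, ((d : ℚ) + (cont u : ℚ)) := by
  classical
  induction μ using Finset.strongInduction with
  | _ μ ih =>
    intro hYD hlen
    rcases Finset.eq_empty_or_nonempty μ with rfl | hne
    · simp [sytCount_empty, weylDim_empty]
    · have hbr := sytCount_branch hYD hne
      have hwb := weyl_branch hYD hlen
      have hn1 : 1 ≤ μ.card := Finset.card_pos.mpr hne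
      have hih : ∀ c ∈ RC μ, (Nat.factorial (μ.card - 1) : ℚ) * weylDim d (μ.erase c) =
          (sytCount (μ.erase c) : ℚ) * ∏ u ∈ μ.erase c, ((d : ℚ) + (cont u : ℚ)) := by
        intro c hc
        have hcμ : c ∈ μ := (mem_RC_iff.mp hc).1
        have h := ih (μ.erase c) (Finset.erase_ssubset hcμ) (mem_RC_iff.mp hc).2
          (le_trans (len_erase_le c) hlen)
        rwa [Finset.card_erase_of_mem hcμ] at h
      have hfac : (Nat.factorial μ.card : ℚ) =
          (μ.card : ℚ) * (Nat.factorial (μ.card - 1) : ℚ) := by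
        have := Nat.mul_factorial_pred (show μ.card ≠ 0 by omega)
        exact_mod_cast this.symm
      calc (Nat.factorial μ.card : ℚ) * weylDim d μ
          = (Nat.factorial (μ.card - 1) : ℚ) * ((μ.card : ℚ) * weylDim d μ) := by
            rw [hfac]; ring
        _ = (Nat.factorial (μ.card - 1) : ℚ) *
            ∑ c ∈ RC μ, ((d : ℚ) + (cont c : ℚ)) * weylDim d (μ.erase c) := by rw [hwb]
        _ = ∑ c ∈ RC μ, ((d : ℚ) + (cont c : ℚ)) *
            ((Nat.factorial (μ.card - 1) : ℚ) * weylDim d (μ.erase c)) := by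
            rw [Finset.mul_sum]
            exact Finset.sum_congr rfl fun c _ => by ring
        _ = ∑ c ∈ RC μ, ((d : ℚ) + (cont c : ℚ)) *
            ((sytCount (μ.erase c) : ℚ) * ∏ u ∈ μ.erase c, ((d : ℚ) + (cont u : ℚ))) := by
            exact Finset.sum_congr rfl fun c hc => by rw [hih c hc]
        _ = ∑ c ∈ RC μ, (sytCount (μ.erase c) : ℚ) * ∏ u ∈ μ, ((d : ℚ) + (cont u : ℚ)) := by
            refine Finset.sum_congr rfl fun c hc => ?_
            rw [← Finset.prod_erase_mul μ _ (mem_RC_iff.mp hc).1]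
            ring
        _ = (∑ c ∈ RC μ, (sytCount (μ.erase c) : ℚ)) * ∏ u ∈ μ, ((d : ℚ) + (cont u : ℚ)) := by
            rw [← Finset.sum_mul]
        _ = (sytCount μ : ℚ) * ∏ u ∈ μ, ((d : ℚ) + (cont u : ℚ)) := by
            rw [hbr]
            push_cast
            ring

/-- for `λ ⊢ n−1` with `len(λ) ≤ d` and `a ∈ AC_d(λ)`,
`n · f^λ · m_{λ∪a} = (d + cont(a)) · f^{λ∪a} · m_λ`. -/
theorem stmt9 (d n : ℕ) (hd : 1 ≤ d) (hn : 1 ≤ n) (μ : Finset Cell) (hYD : IsYD μ)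
    (hcard : μ.card = n - 1) (hlen : len μ ≤ d) (a : Cell) (ha : a ∈ ACd d μ) :
    (n : ℚ) * (sytCount μ : ℚ) * weylDim d (insert a μ) =
      ((d : ℚ) + (cont a : ℚ)) * (sytCount (insert a μ) : ℚ) * weylDim d μ := by
  classical
  rw [ACd, Finset.mem_filter] at ha
  obtain ⟨hAC, hlenins⟩ := ha
  rw [AC, Finset.mem_filter] at hAC
  have hadd : Addable μ a := hAC.2
  obtain ⟨haμ, hYDins⟩ := hadd
  have hcardins : (insert a μ).card = μ.card + 1 := Finset.card_insert_of_notMem haμ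
  have h1 := hook_content μ hYD hlen
  have h2 := hook_content (insert a μ) hYDins hlenins
  rw [hcardins, Nat.factorial_succ, Finset.prod_insert haμ] at h2
  push_cast at h2
  have hncast : (n : ℚ) = (μ.card : ℚ) + 1 := by
    have : n = μ.card + 1 := by omega
    exact_mod_cast this
  have hF1 : (Nat.factorial μ.card : ℚ) ≠ 0 :=
    Nat.cast_ne_zero.mpr (Nat.factorial_ne_zero _)
  rw [hncast]
  apply mul_left_cancel₀ hF1
  linear_combination (sytCount μ : ℚ) * h2 -
    ((d : ℚ) + (cont a : ℚ)) * (sytCount (insert a μ) : ℚ) * h1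
end
end

section
/- With the extended path space H = ℂ^{P̃(λ)}, the Young orthogonal form operators σ_1,…,σ_{n−1}, and the unit vectors |w̃_{S,λ}⟩ for S ∈ S̃(λ) as defined in the context, the operator Π := Σ_{S ∈ S̃(λ)} |w̃_{S,λ}⟩⟨w̃_{S,λ}| commutes with σ_i for every i ∈ {1,…,n−2}: σ_i Π = Π σ_i. -/
open scoped BigOperators

noncomputable section

attribute [local instance] Classical.propDecidable

end

noncomputable section

/-- Extend a word `y : Fin n → Fin m` to `ℕ → ℕ` (junk value `0` outside the range). -/
def extWord {n m : ℕ} (y : Fin n → Fin m) : ℕ → ℕ :=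
  fun k => if h : k < n then (y ⟨k, h⟩ : ℕ) else 0

/-- The Young diagram after `k` steps of the growth process described by the word `y`:
at step `k` a new cell is added at the end of row `y k`. -/
def diagAt (y : ℕ → ℕ) : ℕ → Finset Cell
  | 0 => ∅
  | k + 1 => insert (y k, rowLen (diagAt y k) (y k)) (diagAt y k)

/-- The cell added at step `k` of the growth process described by `y`. -/
def newCell (y : ℕ → ℕ) (k : ℕ) : Cell := (y k, rowLen (diagAt y k) (y k))

/-- The content of the cell added at step `k` (i.e. of `T^{k+1} \ T^k`). -/
def contAt (y : ℕ → ℕ) (k : ℕ) : ℤ := cont (newCell y k)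

/-- The axial distance `r_i(T) = cont(T^{i+1} \ T^i) − cont(T^i \ T^{i−1})`. -/
def axial (y : ℕ → ℕ) (i : ℕ) : ℤ := contAt y i - contAt y (i - 1)

end

noncomputable section

attribute [local instance] Classical.propDecidable

/-- A path in the extended Bratteli diagram `B̃` from `∅` to the leaf `(λ,∅)`, encoded by
its Yamanouchi word `y : Fin n → Fin (d+1)` (the 0-based row in which a cell is added at
each step).  The conditions say: every step adds an addable cell (so every level is a
Young diagram with one more cell than the previous one), every level has at most one cell
in (0-based) row `d` (i.e. `T^k_{d+1} ≤ 1`), and the final diagram is `λ ∪ a` for some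
addable cell `a ∈ AC(λ)`. -/
def ValidExtPath (d n : ℕ) (μ : Finset Cell) (y : Fin n → Fin (d + 1)) : Prop :=
  (∀ k < n, Addable (diagAt (extWord y) k) (newCell (extWord y) k)) ∧
  (∀ k ≤ n, rowLen (diagAt (extWord y) k) d ≤ 1) ∧
  (∃ a ∈ AC μ, diagAt (extWord y) n = insert a μ)

/-- The (finite) set `P̃(λ)` of extended paths, as a type. -/
def PathExt (d n : ℕ) (μ : Finset Cell) : Type :=
  {y : Fin n → Fin (d + 1) // ValidExtPath d n μ y}

instance (d n : ℕ) (μ : Finset Cell) : Fintype (PathExt d n μ) := Subtype.fintype _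
instance (d n : ℕ) (μ : Finset Cell) : DecidableEq (PathExt d n μ) :=
  Subtype.instDecidableEq

/-- A prefix `S ∈ S̃(λ)`: a path of length `n−1` in the extended Bratteli diagram ending
at `λ`, encoded by its Yamanouchi word. -/
def ValidExtPrefix (d n : ℕ) (μ : Finset Cell) (z : Fin (n - 1) → Fin (d + 1)) : Prop :=
  (∀ k < n - 1, Addable (diagAt (extWord z) k) (newCell (extWord z) k)) ∧
  (∀ k ≤ n - 1, rowLen (diagAt (extWord z) k) d ≤ 1) ∧
  diagAt (extWord z) (n - 1) = μ

/-- The (finite) set `S̃(λ)` of prefixes, as a type. -/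
def PrefixExt (d n : ℕ) (μ : Finset Cell) : Type :=
  {z : Fin (n - 1) → Fin (d + 1) // ValidExtPrefix d n μ z}

instance (d n : ℕ) (μ : Finset Cell) : Fintype (PrefixExt d n μ) := Subtype.fintype _

/-- The unit vector `|w̃_{S,λ}⟩ = Σ_{a ∈ AC(λ)} √(f^{λ∪a}/(n·f^λ)) |S ∘ (λ∪a)⟩`,
written in coordinates: its `T`-th coordinate is `√(f^{T^n}/(n·f^λ))` if the path `T`
extends the prefix `S`, and `0` otherwise. -/
def wVecExt (d n : ℕ) (μ : Finset Cell) (S : PrefixExt d n μ) : PathExt d n μ → ℂ :=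
  fun T =>
    if ∀ k < n - 1, extWord T.val k = extWord S.val k then
      ((Real.sqrt ((sytCount (diagAt (extWord T.val) n) : ℝ) /
        ((n : ℝ) * (sytCount μ : ℝ)))) : ℂ)
    else 0

/-- The operator `Σ_{S ∈ S̃(λ)} |w̃_{S,λ}⟩⟨w̃_{S,λ}|`. -/
def WmatExt (d n : ℕ) (μ : Finset Cell) : Matrix (PathExt d n μ) (PathExt d n μ) ℂ :=
  ∑ S : PrefixExt d n μ,
    Matrix.vecMulVec (wVecExt d n μ S) (fun T => star (wVecExt d n μ S T))

/-- The Young orthogonal form of the transposition `σ_i` on `ℂ^{P̃(λ)}`: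
`σ_i |T⟩ = (1/r_i(T)) |T⟩ + √(1 − 1/r_i(T)²) |σ_i T⟩`, where `σ_i T` is the path `T` with
its `i`-th vertex replaced by the other intermediate diagram between `T^{i−1}` and
`T^{i+1}` (whenever that diagram is valid). -/
def sigmaMatExt (d n : ℕ) (μ : Finset Cell) (i : ℕ) :
    Matrix (PathExt d n μ) (PathExt d n μ) ℂ :=
  Matrix.of fun T' T =>
    (if T' = T then ((1 : ℂ) / ((axial (extWord T.val) i : ℤ) : ℂ)) else 0) +
    (if (∀ k, k ≠ i → diagAt (extWord T'.val) k = diagAt (extWord T.val) k) ∧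
        diagAt (extWord T'.val) i ≠ diagAt (extWord T.val) i
      then ((Real.sqrt (1 - ((1 : ℝ) / ((axial (extWord T.val) i : ℤ) : ℝ)) ^ 2)) : ℂ)
      else 0)

/-- The operator `π := σ_1 σ_2 ⋯ σ_{n−1}` on `ℂ^{P̃(λ)}`. -/
def piMatExt (d n : ℕ) (μ : Finset Cell) : Matrix (PathExt d n μ) (PathExt d n μ) ℂ :=
  ((List.range (n - 1)).map (fun j => sigmaMatExt d n μ (j + 1))).prod

end

/-!
In coordinates, `Π(T', T) = c(T') c(T)` when `T'` and `T` share their first `n - 1` steps and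
pass through `λ` at level `n - 1`, and `0` otherwise, where `c(T) = √(f^{T^n} / (n f^λ))`.
For `i ≤ n - 2` the operator `σ_i` only changes level `i < n - 1`, so its diagonal coefficient
`1 / r_i` depends only on the first `n - 1` steps and is the same on both sides. The
off-diagonal parts of `(σ_i Π)(T', T)` and `(Π σ_i)(T', T)` vanish unless `T` passes through
`λ` at level `n - 1`, and are then both `√(1 - 1/r_i(T)²) c(T') c(T)` times the number of paths
`U` obtained from `T'` by a swap at level `i` and sharing the first `n - 1` steps of `T` (resp.
with `T'` and `T` exchanged). Such a `U` is unique, since a path is determined by its first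
`n - 1` steps and its last diagram, and one exists iff the other does: splice the first `n - 1`
steps of one path with the last step of another.
-/

section Words

variable {y z : ℕ → ℕ}

theorem diagAt_congr_from {m k : ℕ} (hm : diagAt y m = diagAt z m)
    (h : ∀ j, m ≤ j → j < k → y j = z j) (hmk : m ≤ k) : diagAt y k = diagAt z k := by
  induction k, hmk using Nat.le_induction with
  | base => exact hm
  | succ k hmk ih =>
    rw [diagAt, diagAt, ih fun j hj hjk => h j hj (by omega), h k hmk (by omega)]

theorem diagAt_congr {k : ℕ} (h : ∀ j < k, y j = z j) : diagAt y k = diagAt z k :=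
  diagAt_congr_from rfl (fun j _ hj => h j hj) (Nat.zero_le k)

theorem newCell_congr {k : ℕ} (hd : diagAt y k = diagAt z k) (hk : y k = z k) :
    newCell y k = newCell z k := by
  rw [newCell, newCell, hd, hk]

theorem axial_congr {i : ℕ} (h : ∀ j ≤ i, y j = z j) : axial y i = axial z i := by
  have hcell : ∀ k ≤ i, newCell y k = newCell z k := fun k hk =>
    newCell_congr (diagAt_congr fun j hj => h j (by omega)) (h k hk)
  rw [axial, contAt, contAt, hcell i le_rfl, hcell (i - 1) (Nat.sub_le i 1), ← contAt, ← contAt,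
    ← axial]

theorem diagAt_succ (y : ℕ → ℕ) (k : ℕ) :
    diagAt y (k + 1) = insert (newCell y k) (diagAt y k) := rfl

theorem eq_of_diagAt_succ_eq {k : ℕ} (hy : newCell y k ∉ diagAt y k)
    (h0 : diagAt y k = diagAt z k) (h1 : diagAt y (k + 1) = diagAt z (k + 1)) : y k = z k := by
  rw [diagAt_succ, diagAt_succ, h0] at h1
  have hmem : newCell y k ∈ insert (newCell z k) (diagAt z k) :=
    h1 ▸ Finset.mem_insert_self _ _
  rcases Finset.mem_insert.1 hmem with hcell | hcell
  · exact congrArg Prod.fst hcell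
  · exact absurd hcell (h0 ▸ hy)

end Words

section ExtWord

variable {m p k : ℕ}

theorem extWord_of_lt (y : Fin m → Fin p) (h : k < m) : extWord y k = y ⟨k, h⟩ := by
  simp [extWord, h]

theorem eq_of_extWord_eq {y y' : Fin m → Fin p} (h : ∀ k < m, extWord y k = extWord y' k) :
    y = y' := by
  funext k
  have hk := h k k.2
  rw [extWord_of_lt y k.2, extWord_of_lt y' k.2] at hk
  exact Fin.ext hk

theorem extWord_comp_castLE {m' : ℕ} (y : Fin m → Fin p) (hm : m' ≤ m) (hk : k < m') :
    extWord (y ∘ Fin.castLE hm) k = extWord y k := by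
  rw [extWord_of_lt _ hk, extWord_of_lt y (by omega)]
  rfl

def spliceWord (l : ℕ) (y z : Fin m → Fin p) : Fin m → Fin p :=
  fun k => if (k : ℕ) < l then y k else z k

theorem extWord_spliceWord (l : ℕ) (y z : Fin m → Fin p) (k : ℕ) :
    extWord (spliceWord l y z) k = if k < l then extWord y k else extWord z k := by
  unfold extWord spliceWord
  split_ifs <;> simp_all

theorem diagAt_spliceWord_of_le {l : ℕ} (y z : Fin m → Fin p) (hk : k ≤ l) :
    diagAt (extWord (spliceWord l y z)) k = diagAt (extWord y) k :=
  diagAt_congr fun j hj => by rw [extWord_spliceWord, if_pos (by omega)]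

theorem diagAt_spliceWord_of_ge {l : ℕ} {y z : Fin m → Fin p}
    (h : diagAt (extWord y) l = diagAt (extWord z) l) (hk : l ≤ k) :
    diagAt (extWord (spliceWord l y z)) k = diagAt (extWord z) k :=
  diagAt_congr_from (by rw [diagAt_spliceWord_of_le y z le_rfl, h])
    (fun j hj _ => by rw [extWord_spliceWord, if_neg (by omega)]) hk

end ExtWord

noncomputable section Paths

attribute [local instance] Classical.propDecidable

variable {d n : ℕ} {μ : Finset Cell}

namespace PathExt

theorem validExtPath_of_local {y : Fin n → Fin (d + 1)}
    (h : ∀ k ≤ n, ∃ W : PathExt d n μ,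
      diagAt (extWord y) k = diagAt (extWord W.val) k ∧ extWord y k = extWord W.val k) :
    ValidExtPath d n μ y := by
  refine ⟨fun k hk => ?_, fun k hk => ?_, ?_⟩
  · obtain ⟨W, hd, hl⟩ := h k hk.le
    rw [hd, newCell_congr hd hl]
    exact W.2.1 k hk
  · obtain ⟨W, hd, -⟩ := h k hk
    rw [hd]
    exact W.2.2.1 k hk
  · obtain ⟨W, hd, -⟩ := h n le_rfl
    rw [hd]
    exact W.2.2.2

def SamePrefix (T' T : PathExt d n μ) : Prop :=
  ∀ k < n - 1, extWord T'.val k = extWord T.val k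

theorem SamePrefix.symm {T' T : PathExt d n μ} (h : SamePrefix T' T) : SamePrefix T T' :=
  fun k hk => (h k hk).symm

theorem SamePrefix.trans {T₁ T₂ T₃ : PathExt d n μ} (h₁₂ : SamePrefix T₁ T₂)
    (h₂₃ : SamePrefix T₂ T₃) : SamePrefix T₁ T₃ :=
  fun k hk => (h₁₂ k hk).trans (h₂₃ k hk)

theorem SamePrefix.diagAt_eq {T' T : PathExt d n μ} (h : SamePrefix T' T) {k : ℕ}
    (hk : k ≤ n - 1) : diagAt (extWord T'.val) k = diagAt (extWord T.val) k :=
  diagAt_congr fun j hj => h j (by omega)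

theorem SamePrefix.axial_eq {T' T : PathExt d n μ} (h : SamePrefix T' T) {i : ℕ}
    (hi : i + 1 < n) : axial (extWord T'.val) i = axial (extWord T.val) i :=
  axial_congr fun j hj => h j (by omega)

theorem eq_of_samePrefix {U V : PathExt d n μ} (h : SamePrefix U V)
    (hn : diagAt (extWord U.val) n = diagAt (extWord V.val) n) : U = V := by
  refine Subtype.ext (eq_of_extWord_eq fun k hk => ?_)
  rcases Nat.lt_or_ge k (n - 1) with hk' | hk'
  · exact h k hk'
  · obtain rfl : k = n - 1 := by omega
    refine eq_of_diagAt_succ_eq (U.2.1 _ hk).1 (h.diagAt_eq le_rfl) ?_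
    rwa [Nat.sub_add_cancel (by omega)]

def splice (T V : PathExt d n μ)
    (h : diagAt (extWord T.val) (n - 1) = diagAt (extWord V.val) (n - 1)) : PathExt d n μ :=
  ⟨spliceWord (n - 1) T.val V.val, validExtPath_of_local fun k _ => by
    rcases Nat.lt_or_ge k (n - 1) with hk | hk
    · exact ⟨T, diagAt_spliceWord_of_le _ _ hk.le, by rw [extWord_spliceWord, if_pos hk]⟩
    · exact ⟨V, diagAt_spliceWord_of_ge h hk, by rw [extWord_spliceWord, if_neg (by omega)]⟩⟩

section Splice

variable (T V : PathExt d n μ)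
  (h : diagAt (extWord T.val) (n - 1) = diagAt (extWord V.val) (n - 1))

theorem samePrefix_splice : SamePrefix (T.splice V h) T := fun k hk =>
  (extWord_spliceWord _ _ _ k).trans (if_pos hk)

theorem diagAt_splice_of_le {k : ℕ} (hk : k ≤ n - 1) :
    diagAt (extWord (T.splice V h).val) k = diagAt (extWord T.val) k :=
  diagAt_spliceWord_of_le _ _ hk

theorem diagAt_splice_of_ge {k : ℕ} (hk : n - 1 ≤ k) :
    diagAt (extWord (T.splice V h).val) k = diagAt (extWord V.val) k :=
  diagAt_spliceWord_of_ge h hk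

end Splice

def truncate (T : PathExt d n μ) (hT : diagAt (extWord T.val) (n - 1) = μ) :
    PrefixExt d n μ :=
  ⟨T.val ∘ Fin.castLE (Nat.sub_le n 1), by
    have hdiag : ∀ k ≤ n - 1, diagAt (extWord (T.val ∘ Fin.castLE (Nat.sub_le n 1))) k =
        diagAt (extWord T.val) k := fun k hk =>
      diagAt_congr fun j hj => extWord_comp_castLE _ _ (by omega)
    refine ⟨fun k hk => ?_, fun k hk => ?_, (hdiag _ le_rfl).trans hT⟩
    · rw [hdiag k hk.le, newCell_congr (hdiag k hk.le) (extWord_comp_castLE _ _ hk)]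
      exact T.2.1 k (by omega)
    · rw [hdiag k hk]
      exact T.2.2.1 k (by omega)⟩

theorem extWord_truncate (T : PathExt d n μ) (hT : diagAt (extWord T.val) (n - 1) = μ) :
    ∀ k < n - 1, extWord (T.truncate hT).val k = extWord T.val k :=
  fun _ hk => extWord_comp_castLE T.val (Nat.sub_le n 1) hk

def IsSwap (i : ℕ) (A B : PathExt d n μ) : Prop :=
  (∀ k, k ≠ i → diagAt (extWord A.val) k = diagAt (extWord B.val) k) ∧
    diagAt (extWord A.val) i ≠ diagAt (extWord B.val) i

theorem IsSwap.symm {i : ℕ} {A B : PathExt d n μ} (h : IsSwap i A B) : IsSwap i B A :=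
  ⟨fun k hk => (h.1 k hk).symm, Ne.symm h.2⟩

def coeff (T : PathExt d n μ) : ℂ :=
  ((Real.sqrt ((sytCount (diagAt (extWord T.val) n) : ℝ) / ((n : ℝ) * (sytCount μ : ℝ)))) : ℂ)

def swapCoeff (i : ℕ) (T : PathExt d n μ) : ℂ :=
  ((Real.sqrt (1 - ((1 : ℝ) / ((axial (extWord T.val) i : ℤ) : ℝ)) ^ 2)) : ℂ)

theorem sigmaMatExt_apply (i : ℕ) (A B : PathExt d n μ) :
    sigmaMatExt d n μ i A B =
      (if A = B then 1 / ((axial (extWord B.val) i : ℤ) : ℂ) else 0) +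
      (if IsSwap i A B then swapCoeff i B else 0) := by
  simp only [sigmaMatExt, Matrix.of_apply, swapCoeff]
  congr 1
  split_ifs <;> simp_all [IsSwap]

theorem WmatExt_apply (T' T : PathExt d n μ) :
    WmatExt d n μ T' T =
      if SamePrefix T' T ∧ diagAt (extWord T.val) (n - 1) = μ then coeff T' * coeff T
      else 0 := by
  have hterm : ∀ S, wVecExt d n μ S T' * star (wVecExt d n μ S T) =
      if (∀ k < n - 1, extWord T'.val k = extWord S.val k) ∧
          (∀ k < n - 1, extWord T.val k = extWord S.val k)
        then coeff T' * coeff T else 0 := fun S => by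
    unfold wVecExt
    split_ifs <;> simp_all [coeff, Complex.conj_ofReal]
  rw [WmatExt, Matrix.sum_apply]
  simp only [Matrix.vecMulVec_apply, hterm]
  by_cases hc : SamePrefix T' T ∧ diagAt (extWord T.val) (n - 1) = μ
  · have hS₀ := T.extWord_truncate hc.2
    rw [if_pos hc, Fintype.sum_eq_single (T.truncate hc.2) fun S hS => if_neg ?_,
      if_pos ⟨fun k hk => (hc.1 k hk).trans (hS₀ k hk).symm, fun k hk => (hS₀ k hk).symm⟩]
    rintro ⟨-, hTS⟩
    exact hS (Subtype.ext (eq_of_extWord_eq fun k hk => (hTS k hk).symm.trans (hS₀ k hk).symm))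
  · rw [if_neg hc]
    refine Finset.sum_eq_zero fun S _ => if_neg ?_
    rintro ⟨hT'S, hTS⟩
    refine hc ⟨fun k hk => (hT'S k hk).trans (hTS k hk).symm, ?_⟩
    rw [diagAt_congr hTS]
    exact S.2.2.2

section SwapPartners

variable {i : ℕ}

def swapPartners (i : ℕ) (T' T : PathExt d n μ) : Finset (PathExt d n μ) :=
  Finset.univ.filter fun U => IsSwap i T' U ∧ SamePrefix U T

theorem mem_swapPartners {T' T U : PathExt d n μ} :
    U ∈ swapPartners i T' T ↔ IsSwap i T' U ∧ SamePrefix U T := by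
  simp [swapPartners]

theorem card_swapPartners_le_one (hi : n ≠ i) (T' T : PathExt d n μ) :
    (swapPartners i T' T).card ≤ 1 := by
  refine Finset.card_le_one.2 fun U₁ h₁ U₂ h₂ => ?_
  obtain ⟨hswap₁, hpre₁⟩ := mem_swapPartners.1 h₁
  obtain ⟨hswap₂, hpre₂⟩ := mem_swapPartners.1 h₂
  exact eq_of_samePrefix (hpre₁.trans hpre₂.symm) ((hswap₁.1 n hi).symm.trans (hswap₂.1 n hi))

theorem swapPartners_nonempty_swap (hi : i + 1 < n) {T' T : PathExt d n μ}
    (h : (swapPartners i T' T).Nonempty) : (swapPartners i T T').Nonempty := by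
  obtain ⟨U, hU⟩ := h
  obtain ⟨hswap, hpre⟩ := mem_swapPartners.1 hU
  have hlast : diagAt (extWord T'.val) (n - 1) = diagAt (extWord T.val) (n - 1) :=
    (hswap.1 (n - 1) (by omega)).trans (hpre.diagAt_eq le_rfl)
  refine ⟨T'.splice T hlast, mem_swapPartners.2 ⟨⟨fun k hk => ?_, ?_⟩, samePrefix_splice _ _ _⟩⟩
  · rcases Nat.le_total k (n - 1) with hk' | hk'
    · rw [diagAt_splice_of_le _ _ _ hk', hswap.1 k hk, hpre.diagAt_eq hk']
    · rw [diagAt_splice_of_ge _ _ _ hk']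
  · rw [diagAt_splice_of_le _ _ _ (by omega), ← hpre.diagAt_eq (by omega)]
    exact hswap.2.symm

theorem card_swapPartners_comm (hi : i + 1 < n) (T' T : PathExt d n μ) :
    (swapPartners i T' T).card = (swapPartners i T T').card := by
  have hiff : (swapPartners i T' T).Nonempty ↔ (swapPartners i T T').Nonempty :=
    ⟨swapPartners_nonempty_swap hi, swapPartners_nonempty_swap hi⟩
  rw [← Finset.card_pos, ← Finset.card_pos] at hiff
  have := card_swapPartners_le_one (i := i) (by omega) T' T
  have := card_swapPartners_le_one (i := i) (by omega) T T'
  omega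

theorem ite_isSwap_mul_WmatExt (hi : i + 1 < n) (T' T U : PathExt d n μ) :
    (if IsSwap i T' U then swapCoeff i U else 0) * WmatExt d n μ U T =
      if U ∈ swapPartners i T' T then
        (if diagAt (extWord T.val) (n - 1) = μ then swapCoeff i T * (coeff T' * coeff T) else 0)
      else 0 := by
  rw [WmatExt_apply]
  by_cases hswap : IsSwap i T' U
  · by_cases hpre : SamePrefix U T
    · have hcoeff : coeff U = coeff T' := by rw [coeff, coeff, hswap.1 n (by omega)]
      have hswapCoeff : swapCoeff i U = swapCoeff i T := by
        rw [swapCoeff, swapCoeff, hpre.axial_eq hi]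
      simp only [if_pos hswap, if_pos (mem_swapPartners.2 ⟨hswap, hpre⟩), hpre, true_and,
        hcoeff, hswapCoeff, mul_ite, mul_zero]
    · simp only [hpre, false_and, mem_swapPartners, and_false, if_false, mul_zero]
  · simp only [hswap, false_and, mem_swapPartners, if_false, zero_mul]

theorem WmatExt_mul_ite_isSwap (hi : i + 1 < n) (T' T U : PathExt d n μ) :
    WmatExt d n μ T' U * (if IsSwap i U T then swapCoeff i T else 0) =
      if U ∈ swapPartners i T T' then
        (if diagAt (extWord T.val) (n - 1) = μ then swapCoeff i T * (coeff T' * coeff T) else 0)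
      else 0 := by
  rw [WmatExt_apply]
  by_cases hswap : IsSwap i U T
  · by_cases hpre : SamePrefix T' U
    · have hcoeff : coeff U = coeff T := by rw [coeff, coeff, hswap.1 n (by omega)]
      have hlast : diagAt (extWord U.val) (n - 1) = diagAt (extWord T.val) (n - 1) :=
        hswap.1 (n - 1) (by omega)
      simp only [if_pos hswap, if_pos (mem_swapPartners.2 ⟨hswap.symm, hpre.symm⟩), hpre,
        true_and, hcoeff, hlast, ite_mul, zero_mul]
      rw [mul_comm (coeff T' * coeff T)]
    · have hpre' : ¬SamePrefix U T' := fun h => hpre h.symm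
      simp only [hpre, hpre', false_and, mem_swapPartners, and_false, if_false, zero_mul]
  · have hswap' : ¬IsSwap i T U := fun h => hswap h.symm
    simp only [hswap, hswap', false_and, mem_swapPartners, if_false, mul_zero]

theorem commute_sigmaMatExt_WmatExt (hi : i + 1 < n) :
    Commute (sigmaMatExt d n μ i) (WmatExt d n μ) := by
  ext T' T
  have hdiag : WmatExt d n μ T' T * (1 / ((axial (extWord T'.val) i : ℤ) : ℂ)) =
      WmatExt d n μ T' T * (1 / ((axial (extWord T.val) i : ℤ) : ℂ)) := by
    rw [WmatExt_apply]
    split_ifs with h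
    · rw [h.1.axial_eq hi]
    · rw [zero_mul, zero_mul]
  simp only [Matrix.mul_apply, sigmaMatExt_apply, add_mul, mul_add, Finset.sum_add_distrib,
    ite_isSwap_mul_WmatExt hi, WmatExt_mul_ite_isSwap hi, Finset.sum_ite_mem, Finset.univ_inter,
    Finset.sum_const, card_swapPartners_comm hi T' T]
  congr 1
  simp only [ite_mul, zero_mul, mul_ite, mul_zero, Finset.sum_ite_eq, Finset.sum_ite_eq',
    Finset.mem_univ, if_true]
  rw [mul_comm, hdiag]

end SwapPartners

end PathExt

end Paths

theorem stmt13_general (d n : ℕ) (μ : Finset Cell) :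
    ∀ i, 1 ≤ i → i ≤ n - 2 →
      sigmaMatExt d n μ i * WmatExt d n μ = WmatExt d n μ * sigmaMatExt d n μ i :=
  fun _ hi₁ hi₂ => (PathExt.commute_sigmaMatExt_WmatExt (by omega)).eq

/-- the operator `Π := Σ_{S ∈ S̃(λ)} |w̃_{S,λ}⟩⟨w̃_{S,λ}|` commutes with the
Young orthogonal form operators `σ_i` for every `i ∈ {1,…,n−2}`. -/
theorem stmt13 (d n : ℕ) (hd : 1 ≤ d) (hn : 3 ≤ n) (μ : Finset Cell) (hYD : IsYD μ)
    (hcard : μ.card = n - 1) (hlen : len μ ≤ d) :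
    ∀ i, 1 ≤ i → i ≤ n - 2 →
      sigmaMatExt d n μ i * WmatExt d n μ = WmatExt d n μ * sigmaMatExt d n μ i :=
  stmt13_general d n μ
end

section
/- With the path space H = ℂ^{P(λ)}, the operators σ_i, π := σ_1 ⋯ σ_{n−1}, the vectors |v_{S,λ}⟩, and the diagonal operator ρ̂ := Σ_{k=1}^n π^k (Σ_{S ∈ S(λ)} |v_{S,λ}⟩⟨v_{S,λ}|) π^{−k} (which acts diagonally by ρ̂|T⟩ = (d + cont(a))|T⟩ when T^n = λ∪a) as defined in the context, let ρ̂^{−1/2} denote the positive semidefinite matrix acting diagonally by ρ̂^{−1/2}|T⟩ = (d + cont(a))^{−1/2}|T⟩. Then ρ̂^{−1/2} (Σ_{S ∈ S(λ)} |v_{S,λ}⟩⟨v_{S,λ}|) ρ̂^{−1/2} = Σ_{S ∈ S(λ)} |w_{S,λ}⟩⟨w_{S,λ}|, where |w_{S,λ}⟩ := Σ_{a ∈ AC_d(λ)} √(f^{λ∪a} / (n · f^λ)) |S ∘ (λ∪a)⟩. -/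
open scoped BigOperators

noncomputable section

attribute [local instance] Classical.propDecidable

end

noncomputable section

attribute [local instance] Classical.propDecidable

/-- A path in the Bratteli diagram `B` from `∅` to the leaf `(λ,∅)`, encoded by its
Yamanouchi word `y : Fin n → Fin d` (the 0-based row in which a cell is added at each
step; rows are `< d`, so every level has at most `d` rows).  Every step adds an addable
cell and the final diagram is `λ ∪ a` for some `a ∈ AC_d(λ)`. -/
def ValidPath (d n : ℕ) (μ : Finset Cell) (y : Fin n → Fin d) : Prop :=
  (∀ k < n, Addable (diagAt (extWord y) k) (newCell (extWord y) k)) ∧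
  (∃ a ∈ ACd d μ, diagAt (extWord y) n = insert a μ)

/-- The (finite) set `P(λ)` of paths, as a type. -/
def PathStd (d n : ℕ) (μ : Finset Cell) : Type :=
  {y : Fin n → Fin d // ValidPath d n μ y}

instance (d n : ℕ) (μ : Finset Cell) : Fintype (PathStd d n μ) := Subtype.fintype _
instance (d n : ℕ) (μ : Finset Cell) : DecidableEq (PathStd d n μ) :=
  Subtype.instDecidableEq

/-- A prefix `S ∈ S(λ)`: a path of length `n−1` ending at `λ` with at most `d` rows at
each level, encoded by its Yamanouchi word. -/
def ValidPrefix (d n : ℕ) (μ : Finset Cell) (z : Fin (n - 1) → Fin d) : Prop :=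
  (∀ k < n - 1, Addable (diagAt (extWord z) k) (newCell (extWord z) k)) ∧
  diagAt (extWord z) (n - 1) = μ

/-- The (finite) set `S(λ)` of prefixes, as a type. -/
def PrefixStd (d n : ℕ) (μ : Finset Cell) : Type :=
  {z : Fin (n - 1) → Fin d // ValidPrefix d n μ z}

instance (d n : ℕ) (μ : Finset Cell) : Fintype (PrefixStd d n μ) := Subtype.fintype _

/-- The vector `|v_{S,λ}⟩ = Σ_{a ∈ AC_d(λ)} √(m_{λ∪a}/m_λ) |S ∘ (λ∪a)⟩`, in coordinates:
its `T`-th coordinate is `√(m_{T^n}/m_λ)` if the path `T` extends the prefix `S`, and `0`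
otherwise. -/
def vVec (d n : ℕ) (μ : Finset Cell) (S : PrefixStd d n μ) : PathStd d n μ → ℂ :=
  fun T =>
    if ∀ k < n - 1, extWord T.val k = extWord S.val k then
      ((Real.sqrt (((weylDim d (diagAt (extWord T.val) n) / weylDim d μ : ℚ) : ℝ))) : ℂ)
    else 0

/-- The operator `Σ_{S ∈ S(λ)} |v_{S,λ}⟩⟨v_{S,λ}|`. -/
def Vmat (d n : ℕ) (μ : Finset Cell) : Matrix (PathStd d n μ) (PathStd d n μ) ℂ :=
  ∑ S : PrefixStd d n μ,
    Matrix.vecMulVec (vVec d n μ S) (fun T => star (vVec d n μ S T))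

/-- The vector `|w_{S,λ}⟩ = Σ_{a ∈ AC_d(λ)} √(f^{λ∪a}/(n·f^λ)) |S ∘ (λ∪a)⟩`. -/
def wVecStd (d n : ℕ) (μ : Finset Cell) (S : PrefixStd d n μ) : PathStd d n μ → ℂ :=
  fun T =>
    if ∀ k < n - 1, extWord T.val k = extWord S.val k then
      ((Real.sqrt ((sytCount (diagAt (extWord T.val) n) : ℝ) /
        ((n : ℝ) * (sytCount μ : ℝ)))) : ℂ)
    else 0

/-- The operator `Σ_{S ∈ S(λ)} |w_{S,λ}⟩⟨w_{S,λ}|`. -/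
def WmatStd (d n : ℕ) (μ : Finset Cell) : Matrix (PathStd d n μ) (PathStd d n μ) ℂ :=
  ∑ S : PrefixStd d n μ,
    Matrix.vecMulVec (wVecStd d n μ S) (fun T => star (wVecStd d n μ S T))

/-- The Young orthogonal form of the transposition `σ_i` on `ℂ^{P(λ)}`:
`σ_i |T⟩ = (1/r_i(T)) |T⟩ + √(1 − 1/r_i(T)²) |σ_i T⟩`, where `σ_i T` is the path `T` with
its `i`-th vertex replaced by the other intermediate diagram between `T^{i−1}` and
`T^{i+1}` (whenever that diagram is valid). -/
def sigmaMatStd (d n : ℕ) (μ : Finset Cell) (i : ℕ) :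
    Matrix (PathStd d n μ) (PathStd d n μ) ℂ :=
  Matrix.of fun T' T =>
    (if T' = T then ((1 : ℂ) / ((axial (extWord T.val) i : ℤ) : ℂ)) else 0) +
    (if (∀ k, k ≠ i → diagAt (extWord T'.val) k = diagAt (extWord T.val) k) ∧
        diagAt (extWord T'.val) i ≠ diagAt (extWord T.val) i
      then ((Real.sqrt (1 - ((1 : ℝ) / ((axial (extWord T.val) i : ℤ) : ℝ)) ^ 2)) : ℂ)
      else 0)

/-- The operator `π := σ_1 σ_2 ⋯ σ_{n−1}` on `ℂ^{P(λ)}`. -/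
def piMatStd (d n : ℕ) (μ : Finset Cell) : Matrix (PathStd d n μ) (PathStd d n μ) ℂ :=
  ((List.range (n - 1)).map (fun j => sigmaMatStd d n μ (j + 1))).prod

/-- The operator `ρ̂ := Σ_{k=1}^n π^k (Σ_{S ∈ S(λ)} |v_{S,λ}⟩⟨v_{S,λ}|) π^{−k}`. -/
def rhoHat (d n : ℕ) (μ : Finset Cell) : Matrix (PathStd d n μ) (PathStd d n μ) ℂ :=
  ∑ k ∈ Finset.Icc 1 n, piMatStd d n μ ^ k * Vmat d n μ * (piMatStd d n μ ^ k)⁻¹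

end


open Polynomial Matrix Finset

noncomputable section
namespace S15

/-- auxiliary polynomial `X (X-1)^j`. -/
def KP (j : ℕ) : ℚ[X] := X * (X - C 1) ^ j

lemma KP_monic (j : ℕ) : (KP j).Monic := (monic_X).mul ((monic_X_sub_C (1:ℚ)).pow j)

lemma KP_natDegree (j : ℕ) : (KP j).natDegree = j + 1 := by
  have h := (monic_X (R := ℚ)).natDegree_mul ((monic_X_sub_C (1:ℚ)).pow j)
  rw [KP, h, natDegree_X, natDegree_pow, natDegree_X_sub_C]
  ring

lemma KP_coeff_self (k : ℕ) : (KP k).coeff k = -(k : ℚ) := by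
  cases k with
  | zero => simp [KP]
  | succ m =>
    rw [KP, coeff_X_mul]
    have hrw : (X - C (1:ℚ)) ^ (m+1) = ∏ _i ∈ range (m+1), (X - C ((fun _ => (1:ℚ)) _i)) := by
      simp
    rw [hrw]
    have h := prod_X_sub_C_coeff_card_pred (range (m+1)) (fun _ => (1:ℚ)) (by simp)
    simp only [card_range, Nat.add_sub_cancel] at h
    rw [h]
    simp

lemma KP_coeff_top {d j : ℕ} (hj : j < d) : (KP j).coeff d = if j = d - 1 then 1 else 0 := by
  rcases eq_or_ne j (d-1) with h | h
  · subst h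
    have hd : (KP (d-1)).natDegree = d := by rw [KP_natDegree]; omega
    simp only [if_pos rfl]
    have h2 := (KP_monic (d-1)).coeff_natDegree
    rwa [hd] at h2
  · rw [if_neg h]
    apply coeff_eq_zero_of_natDegree_lt
    rw [KP_natDegree]; omega

lemma det_updateRow_eq_cramer {d : ℕ} (M : Matrix (Fin d) (Fin d) ℚ) (r : Fin d)
    (v : Fin d → ℚ) : (M.updateRow r v).det = Mᵀ.cramer v r := by
  rw [cramer_apply, updateCol_transpose, det_transpose]

/-- The key Vandermonde identity. -/
lemma vdm_identity (d : ℕ) (x : Fin d → ℚ) :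
    ∑ r : Fin d, x r * (vandermonde (Function.update x r (x r - 1))).det
      = ((∑ r : Fin d, x r) - ∑ k ∈ range d, (k : ℚ)) * (vandermonde x).det := by
  rcases Nat.eq_zero_or_pos d with hd | hd
  · subst hd; simp
  set M := vandermonde x with hM
  -- step 1 : rewrite each summand
  have step1 : ∀ r : Fin d, x r * (vandermonde (Function.update x r (x r - 1))).det
      = Mᵀ.cramer (fun j => x r * (x r - 1) ^ (j : ℕ)) r := by
    intro r
    have hupd : vandermonde (Function.update x r (x r - 1))
        = M.updateRow r (fun j => (x r - 1) ^ (j : ℕ)) := by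
      ext i j
      by_cases h : i = r
      · subst h; simp [vandermonde_apply, Matrix.updateRow_apply]
      · simp [hM, vandermonde_apply, Matrix.updateRow_apply, h, Function.update_of_ne h]
    have hsmul : (fun j : Fin d => x r * (x r - 1) ^ (j : ℕ))
        = x r • (fun j : Fin d => (x r - 1) ^ (j : ℕ)) := by
      funext j; simp
    rw [hupd, ← det_updateRow_smul, det_updateRow_eq_cramer, hsmul]
  rw [Finset.sum_congr rfl (fun r _ => step1 r)]
  -- step 2 : expand the row polynomially
  have step2 : ∀ r : Fin d, (fun j : Fin d => x r * (x r - 1) ^ (j : ℕ))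
      = ∑ k ∈ range (d+1), (x r ^ k) • (fun j : Fin d => (KP (j : ℕ)).coeff k) := by
    intro r
    funext j
    have hdeg : (KP (j : ℕ)).natDegree < d + 1 := by rw [KP_natDegree]; omega
    have h := eval_eq_sum_range' hdeg (x r)
    have heval : eval (x r) (KP (j : ℕ)) = x r * (x r - 1) ^ (j : ℕ) := by
      simp [KP]
    rw [← heval, h]
    simp only [Finset.sum_apply, Pi.smul_apply, smul_eq_mul]
    exact Finset.sum_congr rfl (fun k _ => mul_comm _ _)
  simp_rw [fun r => congrArg (Mᵀ.cramer) (step2 r)]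
  simp only [map_sum, LinearMap.map_smul]
  simp only [Finset.sum_apply, Pi.smul_apply, smul_eq_mul]
  rw [Finset.sum_comm]
  -- key evaluation for powers < d
  have key : ∀ (k : Fin d) (y : Fin d → ℚ),
      ∑ r : Fin d, x r ^ (k : ℕ) * Mᵀ.cramer y r = M.det * y k := by
    intro k y
    have h := congrFun (mulVec_cramer Mᵀ y) k
    rw [det_transpose] at h
    simp only [mulVec, dotProduct, Pi.smul_apply, smul_eq_mul] at h
    rw [← h]
    refine Finset.sum_congr rfl (fun r _ => ?_)
    congr 1
  -- Vieta: the power x_r^d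
  set N : ℚ[X] := ∏ i : Fin d, (X - C (x i)) with hN
  have hNmonic : N.Monic := monic_prod_of_monic _ _ (fun i _ => monic_X_sub_C _)
  have hNdeg : N.natDegree = d := by
    rw [hN, natDegree_prod _ _ (fun i _ => X_sub_C_ne_zero _)]
    simp [natDegree_X_sub_C]
  have hpow : ∀ r : Fin d, x r ^ d = -∑ k : Fin d, N.coeff (k : ℕ) * x r ^ (k : ℕ) := by
    intro r
    have hev : eval (x r) N = 0 := by
      rw [hN, eval_prod]
      exact Finset.prod_eq_zero (mem_univ r) (by simp)
    have hdeg : N.natDegree < d + 1 := by omega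
    have h := eval_eq_sum_range' hdeg (x r)
    rw [hev, Finset.sum_range_succ] at h
    have hcd : N.coeff d = 1 := by
      have h2 := hNmonic.coeff_natDegree; rwa [hNdeg] at h2
    rw [hcd, one_mul] at h
    rw [Fin.sum_univ_eq_sum_range (fun k => N.coeff k * x r ^ k) d]
    linarith [h]
  -- split the outer sum
  rw [Finset.sum_range_succ]
  have hmain : ∀ k ∈ range d,
      (∑ r : Fin d, x r ^ k * Mᵀ.cramer (fun j : Fin d => (KP (j:ℕ)).coeff k) r)
        = M.det * (-(k : ℚ)) := by
    intro k hk
    have hk' : k < d := mem_range.mp hk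
    have h := key ⟨k, hk'⟩ (fun j : Fin d => (KP (j:ℕ)).coeff k)
    simp only at h
    rw [h, KP_coeff_self]
  rw [Finset.sum_congr rfl hmain]
  -- the top term
  have htop : (∑ r : Fin d, x r ^ d * Mᵀ.cramer (fun j : Fin d => (KP (j:ℕ)).coeff d) r)
      = (∑ i : Fin d, x i) * M.det := by
    set b : Fin d → ℚ := fun j => (KP (j:ℕ)).coeff d with hb
    have hexp : ∀ r : Fin d, x r ^ d * Mᵀ.cramer b r
        = ∑ k : Fin d, (-(N.coeff (k:ℕ))) * (x r ^ (k:ℕ) * Mᵀ.cramer b r) := by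
      intro r
      rw [hpow r]
      rw [neg_mul, Finset.sum_mul, ← Finset.sum_neg_distrib]
      exact Finset.sum_congr rfl (fun k _ => by ring)
    rw [Finset.sum_congr rfl (fun r _ => hexp r), Finset.sum_comm]
    have hterm : ∀ k : Fin d, ∑ r : Fin d, (-(N.coeff (k:ℕ))) * (x r ^ (k:ℕ) * Mᵀ.cramer b r)
        = (-(N.coeff (k:ℕ))) * (M.det * b k) := by
      intro k
      rw [← Finset.mul_sum, key k b]
    rw [Finset.sum_congr rfl (fun k _ => hterm k)]
    have hb_eval : ∀ k : Fin d, b k = if (k:ℕ) = d - 1 then 1 else 0 := by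
      intro k; exact KP_coeff_top k.isLt
    have hcoeff : N.coeff (d-1) = -∑ i : Fin d, x i := by
      have h := prod_X_sub_C_coeff_card_pred (univ : Finset (Fin d)) x (by simpa using hd)
      simpa using h
    have hlast : (⟨d-1, by omega⟩ : Fin d) ∈ (univ : Finset (Fin d)) := mem_univ _
    rw [Finset.sum_eq_single (⟨d-1, by omega⟩ : Fin d)]
    · rw [hb_eval, if_pos rfl, hcoeff]
      push_cast
      ring
    · intro k _ hk
      rw [hb_eval, if_neg, mul_zero, mul_zero]
      intro hc
      apply hk
      apply Fin.ext
      simpa using hc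
    · intro h; exact absurd hlast h
  rw [htop, ← Finset.mul_sum, Finset.sum_neg_distrib]
  ring

section Wprod

/-- index set of pairs -/
def PS (d : ℕ) : Finset (ℕ × ℕ) := ((range d) ×ˢ (range d)).filter (fun p => p.1 < p.2)

/-- product-form Vandermonde -/
def W (d : ℕ) (x : ℕ → ℚ) : ℚ := ∏ p ∈ PS d, (x p.1 - x p.2)

lemma det_vdm_prod (d : ℕ) (x : ℕ → ℚ) :
    (vandermonde (fun i : Fin d => x i)).det = ∏ p ∈ PS d, (x p.2 - x p.1) := by
  rw [det_vandermonde]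
  have h1 : ∀ i : Fin d, ∏ j ∈ Ioi i, (x (j:ℕ) - x (i:ℕ))
      = ∏ j : Fin d, (if (i:ℕ) < (j:ℕ) then x (j:ℕ) - x (i:ℕ) else 1) := by
    intro i
    rw [← Finset.prod_filter]
    apply Finset.prod_congr _ (fun _ _ => rfl)
    ext j
    simp only [Finset.mem_Ioi, Finset.mem_filter, Finset.mem_univ, true_and]
    exact Iff.rfl
  calc ∏ i : Fin d, ∏ j ∈ Ioi i, ((fun i : Fin d => x i) j - (fun i : Fin d => x i) i)
      = ∏ i : Fin d, ∏ j : Fin d, (if (i:ℕ) < (j:ℕ) then x (j:ℕ) - x (i:ℕ) else 1) :=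
        Finset.prod_congr rfl (fun i _ => h1 i)
    _ = ∏ i ∈ range d, ∏ j ∈ range d, (if i < j then x j - x i else 1) := by
        rw [← Fin.prod_univ_eq_prod_range (fun i => ∏ j ∈ range d, (if i < j then x j - x i else 1)) d]
        refine Finset.prod_congr rfl (fun i _ => ?_)
        rw [← Fin.prod_univ_eq_prod_range (fun j => (if (i:ℕ) < j then x j - x (i:ℕ) else 1)) d]
    _ = ∏ p ∈ (range d) ×ˢ (range d), (if p.1 < p.2 then x p.2 - x p.1 else 1) := by
        rw [Finset.prod_product]
    _ = ∏ p ∈ PS d, (x p.2 - x p.1) := by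
        rw [PS, Finset.prod_filter]

lemma W_det (d : ℕ) (x : ℕ → ℚ) :
    W d x = (-1)^(PS d).card * (vandermonde (fun i : Fin d => x i)).det := by
  rw [det_vdm_prod, W, ← Finset.prod_const, ← Finset.prod_mul_distrib]
  exact Finset.prod_congr rfl (fun p _ => by ring)

lemma update_comp (d : ℕ) (x : ℕ → ℚ) (r : Fin d) (c : ℚ) :
    (fun i : Fin d => (Function.update x (r:ℕ) c) (i:ℕ)) = Function.update (fun i : Fin d => x i) r c := by
  funext i
  by_cases h : i = r
  · subst h; simp
  · have hv : (i:ℕ) ≠ (r:ℕ) := fun hc => h (Fin.ext hc)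
    rw [Function.update_of_ne h, Function.update_of_ne hv]

/-- Lemma A in product form. -/
lemma W_identity (d : ℕ) (x : ℕ → ℚ) :
    ∑ r ∈ range d, x r * W d (Function.update x r (x r - 1))
      = ((∑ r ∈ range d, x r) - ∑ k ∈ range d, (k : ℚ)) * W d x := by
  have base := vdm_identity d (fun i : Fin d => x i)
  have hL : ∑ r ∈ range d, x r * W d (Function.update x r (x r - 1))
      = (-1)^(PS d).card * ∑ r : Fin d, (fun i : Fin d => x i) r *
          (vandermonde (Function.update (fun i : Fin d => x i) r ((fun i : Fin d => x i) r - 1))).det := by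
    rw [Finset.mul_sum, ← Fin.sum_univ_eq_sum_range
      (fun r => x r * W d (Function.update x r (x r - 1))) d]
    refine Finset.sum_congr rfl (fun r _ => ?_)
    rw [W_det, ← update_comp]
    ring
  rw [hL, base, W_det]
  rw [Fin.sum_univ_eq_sum_range (fun r => x r) d]
  ring

end Wprod

section YD

attribute [local instance] Classical.propDecidable

open Finset

lemma nat_lower (S : Finset ℕ) (h : ∀ b ∈ S, ∀ a, a ≤ b → a ∈ S) :
    S = range S.card := by
  have key : ∀ k, k ∈ S ↔ k < S.card := by
    intro k
    constructor
    · intro hk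
      have hsub : range (k+1) ⊆ S := by
        intro a ha
        exact h k hk a (by simpa using Nat.lt_succ_iff.mp (mem_range.mp ha))
      have := Finset.card_le_card hsub
      simpa using this
    · intro hk
      by_contra hns
      have hsub : S ⊆ range k := by
        intro b hb
        rw [mem_range]
        by_contra hbk
        exact hns (h b hb k (by omega))
      have := Finset.card_le_card hsub
      simp at this
      omega
  ext k
  rw [key, mem_range]

lemma mem_YD {μ : Finset Cell} (h : IsYD μ) (i j : ℕ) :
    (i, j) ∈ μ ↔ j < rowLen μ i := by
  classical
  set S : Finset ℕ := (μ.filter (fun q => q.1 = i)).image Prod.snd with hS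
  have hmem : ∀ m, m ∈ S ↔ (i, m) ∈ μ := by
    intro m
    simp only [hS, Finset.mem_image, Finset.mem_filter]
    constructor
    · rintro ⟨⟨a, b⟩, ⟨hab, h1⟩, h2⟩
      simp only at h1 h2
      subst h1; subst h2; exact hab
    · intro hm
      exact ⟨(i, m), ⟨hm, rfl⟩, rfl⟩
  have hinj : Set.InjOn Prod.snd (↑(μ.filter (fun q => q.1 = i)) : Set Cell) := by
    intro a ha b hb hab
    simp only [Finset.mem_coe, Finset.mem_filter] at ha hb
    exact Prod.ext (ha.2.trans hb.2.symm) hab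
  have hcard : S.card = rowLen μ i := by
    rw [hS, rowLen, Finset.card_image_of_injOn hinj]
  rw [← hmem, nat_lower S (by
    intro b hb a hab
    rw [hmem] at hb ⊢
    exact h (Prod.mk_le_mk.mpr ⟨le_refl i, hab⟩) hb), mem_range, hcard]

lemma rowLen_anti {μ : Finset Cell} (h : IsYD μ) {i j : ℕ} (hij : i ≤ j) :
    rowLen μ j ≤ rowLen μ i := by
  by_contra hc
  push_neg at hc
  have h1 : (j, rowLen μ i) ∈ μ := (mem_YD h _ _).mpr hc
  have h2 : (i, rowLen μ i) ∈ μ := h (Prod.mk_le_mk.mpr ⟨hij, le_refl _⟩) h1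
  rw [mem_YD h] at h2
  omega

lemma lt_len_iff {μ : Finset Cell} (h : IsYD μ) (i : ℕ) :
    i < len μ ↔ 0 < rowLen μ i := by
  classical
  set L : Finset ℕ := (μ.filter (fun c => c.2 = 0)).image Prod.fst with hL
  have hmem : ∀ m, m ∈ L ↔ (m, 0) ∈ μ := by
    intro m
    simp only [hL, Finset.mem_image, Finset.mem_filter]
    constructor
    · rintro ⟨⟨a, b⟩, ⟨hab, h1⟩, h2⟩
      simp only at h1 h2
      subst h1; subst h2; exact hab
    · intro hm
      exact ⟨(m, 0), ⟨hm, rfl⟩, rfl⟩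
  have hinj : Set.InjOn Prod.fst (↑(μ.filter (fun c => c.2 = 0)) : Set Cell) := by
    intro a ha b hb hab
    simp only [Finset.mem_coe, Finset.mem_filter] at ha hb
    exact Prod.ext hab (ha.2.trans hb.2.symm)
  have hcard : L.card = len μ := by
    rw [hL, len, Finset.card_image_of_injOn hinj]
  have hrange : L = range (len μ) := by
    rw [← hcard]
    exact nat_lower L (by
      intro b hb a hab
      rw [hmem] at hb ⊢
      exact h (Prod.mk_le_mk.mpr ⟨hab, le_refl 0⟩) hb)
  rw [← mem_range, ← hrange, hmem, mem_YD h]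

lemma rowLen_zero_of_len_le {μ : Finset Cell} (h : IsYD μ) {i : ℕ} (hi : len μ ≤ i) :
    rowLen μ i = 0 := by
  have := (lt_len_iff h i)
  omega

lemma card_eq_sum {μ : Finset Cell} (h : IsYD μ) {d : ℕ} (hd : len μ ≤ d) :
    μ.card = ∑ i ∈ range d, rowLen μ i := by
  classical
  rw [Finset.card_eq_sum_card_fiberwise (f := Prod.fst) (s := μ) (t := range d) (by
    intro c hc
    rw [Finset.mem_coe, mem_range]
    have h1 : (c.1, c.2) ∈ μ := hc
    rw [mem_YD h] at h1
    have h2 := (lt_len_iff h c.1).mpr (by omega)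
    omega)]
  refine Finset.sum_congr rfl (fun i _ => ?_)
  rw [rowLen]

lemma rowLen_insert {μ : Finset Cell} {a : Cell} (ha : a ∉ μ) (i : ℕ) :
    rowLen (insert a μ) i = if i = a.1 then rowLen μ i + 1 else rowLen μ i := by
  classical
  rw [rowLen, rowLen, Finset.filter_insert]
  by_cases h1 : i = a.1
  · rw [if_pos (h1.symm), if_pos h1,
      Finset.card_insert_of_notMem (fun hc => ha (Finset.mem_filter.mp hc).1)]
  · rw [if_neg (fun hc => h1 (hc.symm)), if_neg h1]

lemma rowLen_erase {μ : Finset Cell} {c : Cell} (hc : c ∈ μ) (i : ℕ) :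
    rowLen (μ.erase c) i = if i = c.1 then rowLen μ i - 1 else rowLen μ i := by
  classical
  rw [rowLen, rowLen, Finset.filter_erase]
  by_cases h1 : i = c.1
  · rw [if_pos h1, Finset.card_erase_of_mem (Finset.mem_filter.mpr ⟨hc, h1.symm⟩)]
  · rw [if_neg h1, Finset.erase_eq_of_notMem (fun hmem => h1 ((Finset.mem_filter.mp hmem).2.symm))]

lemma addable_iff {μ : Finset Cell} (h : IsYD μ) (i j : ℕ) :
    Addable μ (i, j) ↔ (j = rowLen μ i ∧ (i = 0 ∨ rowLen μ i < rowLen μ (i - 1))) := by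
  constructor
  · rintro ⟨hnot, hins⟩
    have hj : ¬ j < rowLen μ i := fun hc => hnot ((mem_YD h i j).mpr hc)
    have hmem : ((i, j) : Cell) ∈ (↑(insert (i, j) μ) : Set Cell) := by
      simp
    have hjr : j = rowLen μ i := by
      by_contra hne
      have hlt : rowLen μ i < j := by omega
      have h2 : ((i, rowLen μ i) : Cell) ∈ (↑(insert (i, j) μ) : Set Cell) :=
        hins (Prod.mk_le_mk.mpr ⟨le_refl i, le_of_lt hlt⟩) hmem
      simp only [Finset.coe_insert, Set.mem_insert_iff, Finset.mem_coe] at h2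
      rcases h2 with h3 | h3
      · exact absurd (Prod.ext_iff.mp h3).2 (by omega)
      · rw [mem_YD h] at h3; omega
    refine ⟨hjr, ?_⟩
    rcases Nat.eq_zero_or_pos i with hi | hi
    · exact Or.inl hi
    · right
      have h2 : ((i - 1, j) : Cell) ∈ (↑(insert (i, j) μ) : Set Cell) :=
        hins (Prod.mk_le_mk.mpr ⟨by omega, le_refl j⟩) hmem
      simp only [Finset.coe_insert, Set.mem_insert_iff, Finset.mem_coe] at h2
      rcases h2 with h3 | h3
      · exact absurd (Prod.ext_iff.mp h3).1 (by omega)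
      · rw [mem_YD h] at h3; omega
  · rintro ⟨hj, hcase⟩
    subst hj
    have hnot : ((i, rowLen μ i) : Cell) ∉ μ := by rw [mem_YD h]; omega
    refine ⟨hnot, ?_⟩
    intro u v hvu hu
    simp only [Finset.coe_insert, Set.mem_insert_iff, Finset.mem_coe] at hu ⊢
    rcases hu with hu | hu
    · subst hu
      obtain ⟨v1, v2⟩ := v
      rw [Prod.mk_le_mk] at hvu
      by_cases hveq : ((v1, v2) : Cell) = (i, rowLen μ i)
      · exact Or.inl hveq
      · right
        rw [mem_YD h]
        rcases Nat.lt_or_ge v1 i with hv1 | hv1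
        · have hi0 : i ≠ 0 := by omega
          have hlt : rowLen μ i < rowLen μ (i - 1) := hcase.resolve_left hi0
          have := rowLen_anti h (show v1 ≤ i - 1 by omega)
          omega
        · have hv1i : v1 = i := by omega
          have hne : v2 ≠ rowLen μ i := by
            intro hc
            exact hveq (by rw [hv1i, hc])
          rw [hv1i]
          omega
    · exact Or.inr (h hvu hu)

lemma removable_iff {μ : Finset Cell} (h : IsYD μ) (i j : ℕ) :
    Removable μ (i, j) ↔ (0 < rowLen μ i ∧ j = rowLen μ i - 1 ∧
      rowLen μ (i + 1) < rowLen μ i) := by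
  constructor
  · rintro ⟨hmem, hers⟩
    have hj : j < rowLen μ i := (mem_YD h i j).mp hmem
    have hpos : 0 < rowLen μ i := by omega
    have hnot : ((i, j) : Cell) ∉ μ.erase (i, j) := Finset.notMem_erase _ _
    have hnot' : ((i, j) : Cell) ∉ (↑(μ.erase (i, j)) : Set Cell) := by
      simpa using hnot
    have hjr : j = rowLen μ i - 1 := by
      by_contra hne
      have hlt : j < rowLen μ i - 1 := by omega
      have h2 : ((i, rowLen μ i - 1) : Cell) ∈ μ := (mem_YD h _ _).mpr (by omega)
      have h3 : ((i, rowLen μ i - 1) : Cell) ∈ (↑(μ.erase (i, j)) : Set Cell) := by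
        simp only [Finset.coe_erase, Set.mem_diff, Finset.mem_coe, Set.mem_singleton_iff]
        exact ⟨h2, by simp [Prod.ext_iff]; omega⟩
      exact hnot' (hers (Prod.mk_le_mk.mpr ⟨le_refl i, by omega⟩) h3)
    refine ⟨hpos, hjr, ?_⟩
    by_contra hge
    push_neg at hge
    have h2 : ((i+1, j) : Cell) ∈ μ := (mem_YD h _ _).mpr (by omega)
    have h3 : ((i+1, j) : Cell) ∈ (↑(μ.erase (i, j)) : Set Cell) := by
      simp only [Finset.coe_erase, Set.mem_diff, Finset.mem_coe, Set.mem_singleton_iff]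
      exact ⟨h2, by simp [Prod.ext_iff]⟩
    exact hnot' (hers (Prod.mk_le_mk.mpr ⟨by omega, le_refl j⟩) h3)
  · rintro ⟨hpos, hj, hlt⟩
    subst hj
    have hmem : ((i, rowLen μ i - 1) : Cell) ∈ μ := (mem_YD h _ _).mpr (by omega)
    refine ⟨hmem, ?_⟩
    intro u v hvu hu
    simp only [Finset.coe_erase, Set.mem_diff, Finset.mem_coe, Set.mem_singleton_iff] at hu ⊢
    obtain ⟨humem, hune⟩ := hu
    refine ⟨h hvu humem, ?_⟩
    intro hq
    subst hq
    obtain ⟨u1, u2⟩ := u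
    rw [Prod.mk_le_mk] at hvu
    have hu2 : u2 < rowLen μ u1 := (mem_YD h _ _).mp humem
    have hule : rowLen μ u1 ≤ rowLen μ i := rowLen_anti h hvu.1
    have hu2e : u2 = rowLen μ i - 1 := by omega
    have hu1 : u1 ≠ i := by
      intro hc; exact hune (by rw [hc, hu2e])
    have : rowLen μ u1 ≤ rowLen μ (i+1) := rowLen_anti h (by omega)
    omega

lemma len_mono {μ ν : Finset Cell} (h : μ ⊆ ν) : len μ ≤ len ν := by
  classical
  apply Finset.card_le_card
  exact Finset.filter_subset_filter _ h

end YD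

section Chains

attribute [local instance] Classical.propDecidable

open Finset

/-- The chain type underlying `sytCount`. -/
def ChainT (μ : Finset Cell) := {T : ℕ → Finset Cell //
    (∀ k, IsYD (T k)) ∧ (∀ k, (T k).card = min k μ.card) ∧
    (∀ k, T k ⊆ T (k + 1)) ∧ (∀ k, μ.card ≤ k → T k = μ)}

lemma sytCount_eq (μ : Finset Cell) : sytCount μ = Nat.card (ChainT μ) := rfl

lemma chain_mono {μ : Finset Cell} (T : ChainT μ) {k m : ℕ} (hkm : k ≤ m) :
    T.val k ⊆ T.val m := by
  induction m with
  | zero => rw [Nat.le_zero.mp hkm]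
  | succ p ih =>
    rcases Nat.lt_or_ge k (p+1) with hlt | hge
    · exact (ih (by omega)).trans (T.2.2.2.1 p)
    · rw [show k = p + 1 by omega]

lemma chain_subset {μ : Finset Cell} (T : ChainT μ) (k : ℕ) : T.val k ⊆ μ := by
  have h1 := chain_mono T (le_max_left k μ.card)
  rwa [T.2.2.2.2 (max k μ.card) (le_max_right _ _)] at h1

instance chain_finite (μ : Finset Cell) : Finite (ChainT μ) := by
  classical
  let f : ChainT μ → (Fin (μ.card + 1) → {s // s ∈ μ.powerset}) :=
    fun T k => ⟨T.val k, Finset.mem_powerset.mpr (chain_subset T k)⟩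
  apply Finite.of_injective f
  intro T1 T2 hf
  apply Subtype.ext; funext k
  rcases Nat.lt_or_ge k (μ.card + 1) with hk | hk
  · have := congrFun hf ⟨k, hk⟩
    simpa [f, Subtype.ext_iff] using this
  · rw [T1.2.2.2.2 k (by omega), T2.2.2.2.2 k (by omega)]

lemma sytCount_of_card_zero {μ : Finset Cell} (h : μ.card = 0) : sytCount μ = 1 := by
  have hμ : μ = ∅ := Finset.card_eq_zero.mp h
  subst hμ
  have hYDe : IsYD (∅ : Finset Cell) := by
    rw [IsYD, Finset.coe_empty]
    exact isLowerSet_empty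
  haveI : Nonempty (ChainT (∅ : Finset Cell)) := by
    refine ⟨⟨fun _ => ∅, fun k => hYDe, fun k => by simp, fun k => subset_rfl,
      fun k _ => rfl⟩⟩
  haveI : Subsingleton (ChainT (∅ : Finset Cell)) := by
    constructor
    intro T1 T2
    apply Subtype.ext; funext k
    have h1 := T1.2.2.1 k
    have h2 := T2.2.2.1 k
    simp only [Finset.card_empty, Nat.min_zero] at h1 h2
    rw [Finset.card_eq_zero.mp h1, Finset.card_eq_zero.mp h2]
  rw [sytCount_eq]
  exact Nat.card_unique

lemma sytCount_branch {μ : Finset Cell} (h : IsYD μ) (hpos : 0 < μ.card) :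
    sytCount μ = ∑ c ∈ RC μ, sytCount (μ.erase c) := by
  classical
  have hcard_erase : ∀ c ∈ RC μ, (μ.erase c).card = μ.card - 1 := by
    intro c hc
    rw [Finset.card_erase_of_mem (Finset.mem_filter.mp hc).1]
  -- the backward map
  have hGk : ∀ (P : Σ c : {c // c ∈ RC μ}, ChainT (μ.erase c.val)),
      (∀ k, IsYD (if k < μ.card then P.2.val k else μ)) ∧
      (∀ k, (if k < μ.card then P.2.val k else μ).card = min k μ.card) ∧
      (∀ k, (if k < μ.card then P.2.val k else μ) ⊆
        (if k + 1 < μ.card then P.2.val (k+1) else μ)) ∧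
      (∀ k, μ.card ≤ k → (if k < μ.card then P.2.val k else μ) = μ) := by
    intro P
    refine ⟨?_, ?_, ?_, ?_⟩
    · intro k
      by_cases hk : k < μ.card
      · rw [if_pos hk]; exact P.2.2.1 k
      · rw [if_neg hk]; exact h
    · intro k
      by_cases hk : k < μ.card
      · rw [if_pos hk]
        have h2 := P.2.2.2.1 k
        have h3 := hcard_erase P.1.val P.1.2
        omega
      · rw [if_neg hk]
        omega
    · intro k
      by_cases hk1 : k + 1 < μ.card
      · rw [if_pos hk1, if_pos (by omega)]
        exact P.2.2.2.2.1 k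
      · rw [if_neg hk1]
        by_cases hk : k < μ.card
        · rw [if_pos hk]
          exact (chain_subset P.2 k).trans (Finset.erase_subset _ _)
        · rw [if_neg hk]
    · intro k hk
      rw [if_neg (by omega)]
  let G : (Σ c : {c // c ∈ RC μ}, ChainT (μ.erase c.val)) → ChainT μ :=
    fun P => ⟨fun k => if k < μ.card then P.2.val k else μ,
      (hGk P).1, (hGk P).2.1, (hGk P).2.2.1, (hGk P).2.2.2⟩
  have hinj : Function.Injective G := by
    rintro ⟨c1, T1⟩ ⟨c2, T2⟩ hG
    have hfun := congrArg Subtype.val hG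
    simp only [G] at hfun
    have hn1 : T1.val (μ.card - 1) = μ.erase c1.val :=
      T1.2.2.2.2 (μ.card - 1) (by rw [hcard_erase c1.val c1.2])
    have hn2 : T2.val (μ.card - 1) = μ.erase c2.val :=
      T2.2.2.2.2 (μ.card - 1) (by rw [hcard_erase c2.val c2.2])
    have hkey := congrFun hfun (μ.card - 1)
    rw [if_pos (show μ.card - 1 < μ.card by omega),
      if_pos (show μ.card - 1 < μ.card by omega), hn1, hn2] at hkey
    have hc : c1 = c2 := by
      apply Subtype.ext
      exact (Finset.erase_inj μ (Finset.mem_filter.mp c1.2).1).mp hkey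
    subst hc
    have hT : T1 = T2 := by
      apply Subtype.ext; funext k
      rcases Nat.lt_or_ge k μ.card with hk | hk
      · have h2 := congrFun hfun k
        rwa [if_pos hk, if_pos hk] at h2
      · rw [T1.2.2.2.2 k (by rw [hcard_erase c1.val c1.2]; omega),
          T2.2.2.2.2 k (by rw [hcard_erase c1.val c1.2]; omega)]
    rw [hT]
  have hsurj : Function.Surjective G := by
    intro T
    have hTn : T.val μ.card = μ := T.2.2.2.2 μ.card le_rfl
    have hsub : T.val (μ.card - 1) ⊆ μ := by
      have h1 := T.2.2.2.1 (μ.card - 1)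
      rwa [show μ.card - 1 + 1 = μ.card by omega, hTn] at h1
    have hcardn : (T.val (μ.card - 1)).card = μ.card - 1 := by
      have h2 := T.2.2.1 (μ.card - 1)
      omega
    have hdiff : (μ \ T.val (μ.card - 1)).card = 1 := by
      rw [Finset.card_sdiff_of_subset hsub, hcardn]
      omega
    obtain ⟨c, hc⟩ := Finset.card_eq_one.mp hdiff
    have hcmem : c ∈ μ ∧ c ∉ T.val (μ.card - 1) := by
      have h2 : c ∈ μ \ T.val (μ.card - 1) := by rw [hc]; exact Finset.mem_singleton_self c
      exact ⟨(Finset.mem_sdiff.mp h2).1, (Finset.mem_sdiff.mp h2).2⟩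
    have herase : T.val (μ.card - 1) = μ.erase c := by
      apply Finset.eq_of_subset_of_card_le
      · intro x hx
        refine Finset.mem_erase.mpr ⟨?_, hsub hx⟩
        intro hxc
        exact hcmem.2 (hxc ▸ hx)
      · rw [Finset.card_erase_of_mem hcmem.1, hcardn]
    have hrc : c ∈ RC μ := by
      refine Finset.mem_filter.mpr ⟨hcmem.1, hcmem.1, ?_⟩
      rw [← herase]
      exact T.2.1 (μ.card - 1)
    refine ⟨⟨⟨c, hrc⟩, ⟨fun k => T.val (min k (μ.card - 1)), ?_, ?_, ?_, ?_⟩⟩, ?_⟩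
    · intro k; exact T.2.1 _
    · intro k
      have h2 := T.2.2.1 (min k (μ.card - 1))
      rw [h2, Finset.card_erase_of_mem hcmem.1]
      omega
    · intro k
      exact chain_mono T (by omega)
    · intro k hk
      rw [Finset.card_erase_of_mem hcmem.1] at hk
      show T.val (min k (μ.card - 1)) = μ.erase c
      rw [show min k (μ.card - 1) = μ.card - 1 by omega, herase]
    · apply Subtype.ext; funext k
      show (if k < μ.card then T.val (min k (μ.card - 1)) else μ) = T.val k
      rcases Nat.lt_or_ge k μ.card with hk | hk
      · rw [if_pos hk, show min k (μ.card - 1) = k by omega]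
      · rw [if_neg (by omega)]
        exact (T.2.2.2.2 k (by omega)).symm
  letI : ∀ c : {c // c ∈ RC μ}, Fintype (ChainT (μ.erase c.val)) := fun c => Fintype.ofFinite _
  letI : Fintype (ChainT μ) := Fintype.ofFinite _
  have h1 : Nat.card (ChainT μ)
      = Nat.card (Σ c : {c // c ∈ RC μ}, ChainT (μ.erase c.val)) :=
    Nat.card_congr (Equiv.ofBijective G ⟨hinj, hsurj⟩).symm
  rw [sytCount_eq, h1, Nat.card_eq_fintype_card, Fintype.card_sigma]
  rw [← Finset.sum_coe_sort (RC μ) (fun c => sytCount (μ.erase c))]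
  refine Finset.sum_congr rfl (fun c _ => ?_)
  rw [sytCount_eq, Nat.card_eq_fintype_card]

end Chains

section Frobenius

attribute [local instance] Classical.propDecidable

open Finset

/-- the shifted row lengths, as rationals -/
def xq (d : ℕ) (μ : Finset Cell) : ℕ → ℚ := fun i => ((rowLen μ i + (d - 1 - i) : ℕ) : ℚ)

/-- product of factorials of shifted row lengths -/
def Pf (d : ℕ) (μ : Finset Cell) : ℚ :=
  ∏ i ∈ range d, ((rowLen μ i + (d - 1 - i)).factorial : ℚ)

lemma prod_d_sub : ∀ d : ℕ, (∏ i ∈ range d, (d - i)) = d.factorial := by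
  intro d
  have h := Finset.prod_range_reflect (fun j => j + 1) d
  rw [Finset.prod_range_add_one_eq_factorial] at h
  rw [← h]
  refine Finset.prod_congr rfl (fun i hi => ?_)
  rw [mem_range] at hi
  omega

lemma superfact (d : ℕ) : (∏ p ∈ PS d, ((p.2 : ℚ) - (p.1 : ℚ)))
    = ∏ i ∈ range d, ((i.factorial : ℚ)) := by
  induction d with
  | zero => simp [PS]
  | succ d ih =>
    have hsplit : PS (d+1) = PS d ∪ (range d).image (fun i => (i, d)) := by
      ext ⟨a, b⟩
      simp only [PS, Finset.mem_filter, Finset.mem_product, Finset.mem_range,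
        Finset.mem_union, Finset.mem_image]
      constructor
      · rintro ⟨⟨ha, hb⟩, hab⟩
        rcases Nat.lt_or_ge b d with hbd | hbd
        · exact Or.inl ⟨⟨by omega, hbd⟩, hab⟩
        · right
          exact ⟨a, by omega, by rw [show d = b by omega]⟩
      · rintro (⟨⟨ha, hb⟩, hab⟩ | ⟨i, hi, heq⟩)
        · exact ⟨⟨by omega, by omega⟩, hab⟩
        · obtain ⟨h1, h2⟩ := Prod.ext_iff.mp heq
          simp only at h1 h2
          omega
    have hdisj : Disjoint (PS d) ((range d).image (fun i => (i, d))) := by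
      rw [Finset.disjoint_left]
      rintro ⟨a, b⟩ hmem himg
      simp only [PS, Finset.mem_filter, Finset.mem_product, Finset.mem_range] at hmem
      simp only [Finset.mem_image, Finset.mem_range] at himg
      obtain ⟨i, hi, heq⟩ := himg
      obtain ⟨h1, h2⟩ := Prod.ext_iff.mp heq
      simp only at h1 h2
      omega
    rw [hsplit, Finset.prod_union hdisj, ih, Finset.prod_image (by
      intro a _ b _ hab
      exact (Prod.ext_iff.mp hab).1)]
    have himg : (∏ i ∈ range d, (((i, d).2 : ℚ) - ((i, d).1 : ℚ)))
        = ((d.factorial : ℕ) : ℚ) := by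
      rw [← prod_d_sub d]
      push_cast
      refine Finset.prod_congr rfl (fun i hi => ?_)
      rw [mem_range] at hi
      rw [Nat.cast_sub (by omega)]
    rw [himg, Finset.prod_range_succ]

lemma W_empty (d : ℕ) : W d (xq d (∅ : Finset Cell))
    = ∏ p ∈ PS d, ((p.2 : ℚ) - (p.1 : ℚ)) := by
  rw [W]
  refine Finset.prod_congr rfl (fun p hp => ?_)
  simp only [PS, Finset.mem_filter, Finset.mem_product, Finset.mem_range] at hp
  obtain ⟨⟨h1, h2⟩, h3⟩ := hp
  have hrow : ∀ i, rowLen (∅ : Finset Cell) i = 0 := by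
    intro i; rw [rowLen]; simp
  rw [xq, xq]
  simp only [hrow, Nat.zero_add]
  have he : (d - 1 - p.1) = (d - 1 - p.2) + (p.2 - p.1) := by omega
  rw [he]
  push_cast [Nat.cast_sub h3.le]
  ring

lemma RC_eq {μ : Finset Cell} (h : IsYD μ) {d : ℕ} (hlen : len μ ≤ d) :
    RC μ = ((range d).filter (fun i => rowLen μ (i+1) < rowLen μ i)).image
      (fun i => ((i, rowLen μ i - 1) : Cell)) := by
  ext ⟨i, j⟩
  simp only [RC, Finset.mem_filter, Finset.mem_image, Finset.mem_range]
  constructor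
  · rintro ⟨hmem, hrem⟩
    obtain ⟨hpos, hj, hlt⟩ := (removable_iff h i j).mp hrem
    have hid : i < d := lt_of_lt_of_le ((lt_len_iff h i).mpr hpos) hlen
    exact ⟨i, ⟨hid, hlt⟩, by rw [← hj]⟩
  · rintro ⟨i', ⟨hid, hlt⟩, heq⟩
    obtain ⟨h1, h2⟩ := Prod.ext_iff.mp heq
    simp only at h1 h2
    subst h1; subst h2
    refine ⟨(mem_YD h _ _).mpr (by omega), (removable_iff h _ _).mpr ⟨by omega, rfl, hlt⟩⟩

lemma frobenius {d : ℕ} : ∀ n (μ : Finset Cell), IsYD μ → len μ ≤ d → μ.card = n →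
    (sytCount μ : ℚ) * Pf d μ = (n.factorial : ℚ) * W d (xq d μ) := by
  intro n
  induction n with
  | zero =>
    intro μ hYD hlen hcard
    have hμ : μ = ∅ := Finset.card_eq_zero.mp hcard
    subst hμ
    rw [sytCount_of_card_zero (by simp), W_empty d, superfact d, Pf]
    have hrow : ∀ i, rowLen (∅ : Finset Cell) i = 0 := by
      intro i; rw [rowLen]; simp
    simp only [hrow, Nat.zero_add, Nat.cast_one, one_mul, Nat.factorial_zero]
    have h := Finset.prod_range_reflect (fun j => ((j.factorial : ℕ) : ℚ)) d
    rw [← h]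
  | succ m ih =>
    intro μ hYD hlen hcard
    have hpos : 0 < μ.card := by omega
    -- the removable-row index set
    set R : Finset ℕ := (range d).filter (fun i => rowLen μ (i+1) < rowLen μ i) with hR
    have hinj : ∀ a ∈ R, ∀ b ∈ R, ((a, rowLen μ a - 1) : Cell) = (b, rowLen μ b - 1) → a = b := by
      intro a _ b _ hab
      exact (Prod.ext_iff.mp hab).1
    rw [sytCount_branch hYD hpos, RC_eq hYD hlen, ← hR, Finset.sum_image hinj,
      Nat.cast_sum, Finset.sum_mul]
    -- rewrite each term via the induction hypothesis
    have hterm : ∀ i ∈ R, (sytCount (μ.erase (i, rowLen μ i - 1)) : ℚ) * Pf d μ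
        = (m.factorial : ℚ) * ((xq d μ i) *
            W d (Function.update (xq d μ) i (xq d μ i - 1))) := by
      intro i hiR
      rw [hR, Finset.mem_filter, mem_range] at hiR
      obtain ⟨hid, hlt⟩ := hiR
      have hrowpos : 0 < rowLen μ i := by omega
      have hcmem : ((i, rowLen μ i - 1) : Cell) ∈ μ := (mem_YD hYD _ _).mpr (by omega)
      have hrem : Removable μ (i, rowLen μ i - 1) :=
        (removable_iff hYD _ _).mpr ⟨hrowpos, rfl, hlt⟩
      have hYD' : IsYD (μ.erase (i, rowLen μ i - 1)) := hrem.2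
      have hlen' : len (μ.erase (i, rowLen μ i - 1)) ≤ d :=
        le_trans (len_mono (Finset.erase_subset _ _)) hlen
      have hcard' : (μ.erase (i, rowLen μ i - 1)).card = m := by
        rw [Finset.card_erase_of_mem hcmem]; omega
      have hIH := ih (μ.erase (i, rowLen μ i - 1)) hYD' hlen' hcard'
      -- identify the data of the erased diagram
      have hrow' : ∀ j, rowLen (μ.erase (i, rowLen μ i - 1)) j
          = if j = i then rowLen μ j - 1 else rowLen μ j := by
        intro j
        rw [rowLen_erase hcmem j]
      have hxq : xq d (μ.erase (i, rowLen μ i - 1))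
          = Function.update (xq d μ) i (xq d μ i - 1) := by
        funext j
        rw [xq, hrow' j]
        by_cases hj : j = i
        · subst hj
          rw [if_pos rfl, Function.update_self, xq]
          have he : (rowLen μ j - 1 + (d - 1 - j)) + 1 = rowLen μ j + (d - 1 - j) := by
            omega
          have h2 : ((rowLen μ j - 1 + (d - 1 - j) : ℕ) : ℚ) + 1
              = ((rowLen μ j + (d - 1 - j) : ℕ) : ℚ) := by exact_mod_cast he
          linarith
        · rw [if_neg hj, Function.update_of_ne hj, xq]
      have hPf : Pf d μ = (xq d μ i) * Pf d (μ.erase (i, rowLen μ i - 1)) := by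
        rw [Pf, Pf, ← Finset.mul_prod_erase (range d) _ (mem_range.mpr hid),
          ← Finset.mul_prod_erase (range d)
            (fun j => ((rowLen (μ.erase (i, rowLen μ i - 1)) j + (d - 1 - j)).factorial : ℚ))
            (mem_range.mpr hid)]
        have htail : ∏ j ∈ (range d).erase i, ((rowLen μ j + (d - 1 - j)).factorial : ℚ)
            = ∏ j ∈ (range d).erase i,
              ((rowLen (μ.erase (i, rowLen μ i - 1)) j + (d - 1 - j)).factorial : ℚ) := by
          refine Finset.prod_congr rfl (fun j hj => ?_)
          rw [hrow' j, if_neg (Finset.ne_of_mem_erase hj)]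
        rw [← htail, ← mul_assoc]
        congr 1
        rw [hrow' i, if_pos rfl, xq]
        have he : rowLen μ i + (d - 1 - i) = (rowLen μ i - 1 + (d - 1 - i)) + 1 := by
          omega
        rw [he, Nat.factorial_succ]
        push_cast
        ring
      rw [hPf, ← mul_assoc, mul_comm (sytCount _ : ℚ) (xq d μ i), mul_assoc, hIH, hxq]
      ring
    rw [Finset.sum_congr rfl hterm]
    -- extend the sum over all rows < d
    have hvanish : ∀ i ∈ range d, i ∉ R →
        (m.factorial : ℚ) * ((xq d μ i) *
          W d (Function.update (xq d μ) i (xq d μ i - 1))) = 0 := by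
      intro i hid hiR
      rw [mem_range] at hid
      rw [hR, Finset.mem_filter, mem_range] at hiR
      have hle : rowLen μ (i+1) ≤ rowLen μ i := rowLen_anti hYD (by omega)
      have heq : rowLen μ (i+1) = rowLen μ i := by omega
      by_cases hi1 : i + 1 < d
      · have hmem : ((i, i+1) : ℕ × ℕ) ∈ PS d := by
          simp only [PS, Finset.mem_filter, Finset.mem_product, Finset.mem_range]
          omega
        have hzero : W d (Function.update (xq d μ) i (xq d μ i - 1)) = 0 := by
          rw [W]
          refine Finset.prod_eq_zero hmem ?_
          simp only [Function.update_self, Function.update_of_ne (show i+1 ≠ i by omega)]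
          rw [xq, xq]
          have he : rowLen μ i + (d - 1 - i) = (rowLen μ (i+1) + (d - 1 - (i+1))) + 1 := by
            omega
          rw [he]
          push_cast
          ring
        rw [hzero]
        ring
      · have hrl : rowLen μ (i+1) = 0 := rowLen_zero_of_len_le hYD (by
          by_contra hc
          push_neg at hc
          have := (lt_len_iff hYD (i+1)).mp (by omega)
          omega)
        have hx0 : xq d μ i = 0 := by
          rw [xq]
          have : rowLen μ i + (d - 1 - i) = 0 := by omega
          rw [this]
          simp
        rw [hx0]
        ring
    rw [Finset.sum_subset (hR ▸ Finset.filter_subset _ _) (by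
      intro i hid hiR
      exact hvanish i hid hiR)]
    rw [← Finset.mul_sum, W_identity d (xq d μ)]
    -- determine the coefficient
    have hsum : (∑ r ∈ range d, xq d μ r) - (∑ k ∈ range d, (k : ℚ)) = ((m+1 : ℕ) : ℚ) := by
      have h1 : ∑ r ∈ range d, xq d μ r
          = ((∑ r ∈ range d, (rowLen μ r + (d - 1 - r)) : ℕ) : ℚ) := by
        rw [Nat.cast_sum]
        refine Finset.sum_congr rfl (fun r _ => by rw [xq])
      have h2 : ∑ r ∈ range d, (rowLen μ r + (d - 1 - r))
          = μ.card + ∑ r ∈ range d, (d - 1 - r) := by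
        rw [Finset.sum_add_distrib, card_eq_sum hYD hlen]
      have h3 : ∑ r ∈ range d, (d - 1 - r) = ∑ r ∈ range d, r := by
        exact Finset.sum_range_reflect (fun j => j) d
      rw [h1, h2, h3, hcard]
      push_cast
      ring
    rw [hsum]
    push_cast [Nat.factorial_succ]
    ring

end Frobenius

section Bridge

attribute [local instance] Classical.propDecidable

open Finset

/-- denominator of the Weyl dimension formula -/
def Dd (d : ℕ) : ℚ := ∏ p ∈ PS d, ((p.2 : ℚ) - (p.1 : ℚ))

lemma Dd_pos (d : ℕ) : 0 < Dd d := by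
  rw [Dd]
  apply Finset.prod_pos
  intro p hp
  simp only [PS, Finset.mem_filter, Finset.mem_product, Finset.mem_range] at hp
  have h1 : p.1 < p.2 := hp.2
  have : (p.1 : ℚ) < (p.2 : ℚ) := by exact_mod_cast h1
  linarith

lemma Pf_pos (d : ℕ) (μ : Finset Cell) : 0 < Pf d μ := by
  rw [Pf]
  apply Finset.prod_pos
  intro i _
  exact_mod_cast Nat.factorial_pos _

lemma W_pos {d : ℕ} {μ : Finset Cell} (h : IsYD μ) (hlen : len μ ≤ d) :
    0 < W d (xq d μ) := by
  rw [W]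
  apply Finset.prod_pos
  intro p hp
  simp only [PS, Finset.mem_filter, Finset.mem_product, Finset.mem_range] at hp
  obtain ⟨⟨h1, h2⟩, h3⟩ := hp
  have hanti : rowLen μ p.2 ≤ rowLen μ p.1 := rowLen_anti h h3.le
  rw [xq, xq]
  have : (rowLen μ p.2 + (d - 1 - p.2)) < (rowLen μ p.1 + (d - 1 - p.1)) := by omega
  have hc : ((rowLen μ p.2 + (d - 1 - p.2) : ℕ) : ℚ)
      < ((rowLen μ p.1 + (d - 1 - p.1) : ℕ) : ℚ) := by exact_mod_cast this
  linarith

lemma weylDim_mul (d : ℕ) (μ : Finset Cell) : weylDim d μ * Dd d = W d (xq d μ) := by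
  rw [weylDim, weylDimVec, Dd, W]
  have hPS : ((Finset.range d) ×ˢ (Finset.range d)).filter (fun p => p.1 < p.2) = PS d := rfl
  rw [hPS, ← Finset.prod_mul_distrib]
  refine Finset.prod_congr rfl (fun p hp => ?_)
  simp only [PS, Finset.mem_filter, Finset.mem_product, Finset.mem_range] at hp
  obtain ⟨⟨h1, h2⟩, h3⟩ := hp
  have hden : ((p.2 : ℚ) - (p.1 : ℚ)) ≠ 0 := by
    have : (p.1 : ℚ) < (p.2 : ℚ) := by exact_mod_cast h3
    linarith
  rw [div_mul_cancel₀ _ hden, xq, xq]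
  have e1 : p.1 ≤ d - 1 := by omega
  have e2 : p.2 ≤ d - 1 := by omega
  push_cast [Nat.cast_sub e1, Nat.cast_sub e2]
  ring

lemma sytCount_pos {d : ℕ} {μ : Finset Cell} (h : IsYD μ) (hlen : len μ ≤ d) :
    0 < (sytCount μ : ℚ) := by
  have hfr := frobenius μ.card μ h hlen rfl
  have hW := W_pos h hlen
  have hPf := Pf_pos d μ
  have hfac : (0:ℚ) < (μ.card.factorial : ℚ) := by exact_mod_cast Nat.factorial_pos _
  by_contra hc
  push_neg at hc
  have h0 : (sytCount μ : ℚ) = 0 := le_antisymm hc (by positivity)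
  rw [h0, zero_mul] at hfr
  nlinarith

end Bridge

section Paths

attribute [local instance] Classical.propDecidable

open Finset

lemma diagAt_congr {y z : ℕ → ℕ} : ∀ k, (∀ m, m < k → y m = z m) → diagAt y k = diagAt z k := by
  intro k
  induction k with
  | zero => intro _; rfl
  | succ p ih =>
    intro hyz
    have h1 : diagAt y p = diagAt z p := ih (fun m hm => hyz m (by omega))
    show insert (y p, rowLen (diagAt y p) (y p)) (diagAt y p)
      = insert (z p, rowLen (diagAt z p) (z p)) (diagAt z p)
    rw [h1, hyz p (by omega)]

/-- the main scalar identity -/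
lemma core_real {d n : ℕ} {μ : Finset Cell} (hd : 1 ≤ d) (hn : 2 ≤ n) (hYD : IsYD μ)
    (hcard : μ.card = n - 1) (hlen : len μ ≤ d)
    (T : PathStd d n μ) (S : PrefixStd d n μ)
    (hpre : ∀ k < n - 1, extWord T.val k = extWord S.val k) :
    (Real.sqrt ((d : ℝ) + ((contAt (extWord T.val) (n - 1) : ℤ) : ℝ)))⁻¹ *
      Real.sqrt (((weylDim d (diagAt (extWord T.val) n) / weylDim d μ : ℚ) : ℝ))
    = Real.sqrt ((sytCount (diagAt (extWord T.val) n) : ℝ) /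
        ((n : ℝ) * (sytCount μ : ℝ))) := by
  have hTS : diagAt (extWord T.val) (n-1) = μ :=
    (diagAt_congr (n-1) (fun m hm => hpre m hm)).trans S.2.2
  set w : ℕ → ℕ := extWord T.val with hw
  obtain ⟨a, hnew⟩ : ∃ a : Cell, newCell w (n-1) = a := ⟨_, rfl⟩
  have ha2 : a.2 = rowLen μ a.1 := by
    rw [← hnew]
    show rowLen (diagAt w (n-1)) (w (n-1)) = rowLen μ (w (n-1))
    rw [hTS]
  have hAdd : Addable μ a := by
    have h1 := T.2.1 (n-1) (by omega)
    rw [← hw, hnew] at h1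
    rwa [hTS] at h1
  have hdiagn : diagAt w n = insert a μ := by
    have h1 : diagAt w ((n-1)+1) = insert (newCell w (n-1)) (diagAt w (n-1)) := rfl
    rw [hnew, hTS] at h1
    rwa [show (n-1)+1 = n by omega] at h1
  have haACd : a ∈ ACd d μ := by
    obtain ⟨a', ha'mem, ha'⟩ := T.2.2
    rw [← hw, hdiagn] at ha'
    have hmem : a ∈ insert a' μ := by rw [← ha']; exact Finset.mem_insert_self a μ
    rcases Finset.mem_insert.mp hmem with h1 | h1
    · rwa [h1]
    · exact absurd h1 hAdd.1
  have hνYD : IsYD (insert a μ) := hAdd.2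
  have hνlen : len (insert a μ) ≤ d := (Finset.mem_filter.mp haACd).2
  have hcardν : (insert a μ).card = n := by
    rw [Finset.card_insert_of_notMem hAdd.1, hcard]; omega
  have hid : a.1 < d := by
    have hmem : a ∈ insert a μ := Finset.mem_insert_self a μ
    have h1 : a.2 < rowLen (insert a μ) a.1 := by
      rw [← mem_YD hνYD]; exact hmem
    have h2 : a.1 < len (insert a μ) := (lt_len_iff hνYD a.1).mpr (by omega)
    omega
  have hcont : contAt w (n-1) = cont a := by rw [contAt, hnew]
  -- the numeric value X = d + cont a
  have hXnat : ((d : ℤ) + cont a) = ((rowLen μ a.1 + (d - 1 - a.1) + 1 : ℕ) : ℤ) := by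
    show (d : ℤ) + ((a.2 : ℤ) - (a.1 : ℤ)) = _
    rw [ha2]
    push_cast
    omega
  set X : ℕ := rowLen μ a.1 + (d - 1 - a.1) + 1 with hX
  -- rational identity
  have e1 : weylDim d μ * Dd d = W d (xq d μ) := weylDim_mul d μ
  have e2 : weylDim d (insert a μ) * Dd d = W d (xq d (insert a μ)) := weylDim_mul d _
  have e3 : (sytCount μ : ℚ) * Pf d μ = ((n-1).factorial : ℚ) * W d (xq d μ) :=
    frobenius (n-1) μ hYD hlen hcard
  have e4 : (sytCount (insert a μ) : ℚ) * Pf d (insert a μ)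
      = (n.factorial : ℚ) * W d (xq d (insert a μ)) :=
    frobenius n (insert a μ) hνYD hνlen hcardν
  have e5 : Pf d (insert a μ) = (X : ℚ) * Pf d μ := by
    rw [Pf, Pf, ← Finset.mul_prod_erase (range d) _ (mem_range.mpr hid),
      ← Finset.mul_prod_erase (range d)
        (fun j => ((rowLen μ j + (d - 1 - j)).factorial : ℚ)) (mem_range.mpr hid),
      ← mul_assoc]
    have htail : ∏ j ∈ (range d).erase a.1,
        ((rowLen (insert a μ) j + (d - 1 - j)).factorial : ℚ)
        = ∏ j ∈ (range d).erase a.1, ((rowLen μ j + (d - 1 - j)).factorial : ℚ) := by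
      refine Finset.prod_congr rfl (fun j hj => ?_)
      rw [rowLen_insert hAdd.1 j, if_neg (Finset.ne_of_mem_erase hj)]
    rw [htail]
    congr 1
    rw [rowLen_insert hAdd.1 a.1, if_pos rfl]
    have he : rowLen μ a.1 + 1 + (d - 1 - a.1) = (rowLen μ a.1 + (d - 1 - a.1)) + 1 := by
      omega
    rw [he, Nat.factorial_succ, hX]
    push_cast
    ring
  have hfact : (n : ℚ) * ((n-1).factorial : ℚ) = (n.factorial : ℚ) := by
    exact_mod_cast Nat.mul_factorial_pred (show n ≠ 0 by omega)
  -- nonzeroness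
  have hWμ := W_pos hYD hlen
  have hWν := W_pos hνYD hνlen
  have hDd := Dd_pos d
  have hPfμ := Pf_pos d μ
  have hfμ := sytCount_pos hYD hlen
  have hwμ : weylDim d μ ≠ 0 := by
    intro hc
    rw [hc, zero_mul] at e1
    linarith
  have hXpos : (0:ℚ) < (X:ℚ) := by exact_mod_cast Nat.succ_pos _
  have hnQ : (0:ℚ) < (n:ℚ) := by exact_mod_cast (show 0 < n by omega)
  -- the main cancelled identity
  have hmain : (n:ℚ) * (sytCount μ : ℚ) * weylDim d (insert a μ) * (Dd d * Pf d μ)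
      = (X:ℚ) * (sytCount (insert a μ) : ℚ) * weylDim d μ * (Dd d * Pf d μ) := by
    linear_combination ((n:ℚ) * weylDim d (insert a μ) * Dd d) * e3
      + ((n:ℚ) * ((n-1).factorial : ℚ) * W d (xq d μ)) * e2
      - (weylDim d μ * Dd d) * e4
      + ((sytCount (insert a μ) : ℚ) * weylDim d μ * Dd d) * e5
      - ((n.factorial : ℚ) * W d (xq d (insert a μ))) * e1
      + (W d (xq d μ) * W d (xq d (insert a μ))) * hfact
  have hmain' : (n:ℚ) * (sytCount μ : ℚ) * weylDim d (insert a μ)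
      = (X:ℚ) * (sytCount (insert a μ) : ℚ) * weylDim d μ :=
    mul_right_cancel₀ (by positivity) hmain
  have hQ : ((X:ℚ))⁻¹ * (weylDim d (insert a μ) / weylDim d μ)
      = (sytCount (insert a μ) : ℚ) / ((n:ℚ) * (sytCount μ : ℚ)) := by
    field_simp
    linear_combination hmain'
  -- pass to the reals
  rw [hdiagn, hcont]
  have hXR : (d : ℝ) + ((cont a : ℤ) : ℝ) = ((X:ℕ) : ℝ) := by
    exact_mod_cast congrArg (fun t : ℤ => (t : ℝ)) hXnat
  rw [hXR, ← Real.sqrt_inv, ← Real.sqrt_mul (by positivity)]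
  congr 1
  have hQR := congrArg (fun q : ℚ => (q : ℝ)) hQ
  push_cast at hQR
  push_cast
  exact_mod_cast hQR

end Paths

end S15


/-- let `ρ̂^{−1/2}` be the diagonal matrix acting by
`ρ̂^{−1/2}|T⟩ = (d + cont(a))^{−1/2}|T⟩` when `T^n = λ∪a` (the cell `a` added in the last
step of `T` has content `contAt (extWord T.val) (n−1)`).  Then
`ρ̂^{−1/2} (Σ_{S ∈ S(λ)} |v_{S,λ}⟩⟨v_{S,λ}|) ρ̂^{−1/2} = Σ_{S ∈ S(λ)} |w_{S,λ}⟩⟨w_{S,λ}|`. -/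
theorem stmt15 (d n : ℕ) (hd : 1 ≤ d) (hn : 2 ≤ n) (μ : Finset Cell) (hYD : IsYD μ)
    (hcard : μ.card = n - 1) (hlen : len μ ≤ d)
    (Rinv : Matrix (PathStd d n μ) (PathStd d n μ) ℂ)
    (hRinv : Rinv = Matrix.diagonal (fun T =>
      (((Real.sqrt ((d : ℝ) + ((contAt (extWord T.val) (n - 1) : ℤ) : ℝ)))⁻¹ : ℝ) : ℂ))) :
    Rinv * Vmat d n μ * Rinv = WmatStd d n μ := by
  subst hRinv
  have hcore : ∀ (S : PrefixStd d n μ) (T : PathStd d n μ),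
      (((Real.sqrt ((d : ℝ) + ((contAt (extWord T.val) (n - 1) : ℤ) : ℝ)))⁻¹ : ℝ) : ℂ) *
        vVec d n μ S T = wVecStd d n μ S T := by
    intro S T
    by_cases hpre : ∀ k < n - 1, extWord T.val k = extWord S.val k
    · rw [vVec, wVecStd]
      simp only [if_pos hpre]
      rw [← Complex.ofReal_mul]
      exact congrArg _ (S15.core_real hd hn hYD hcard hlen T S hpre)
    · rw [vVec, wVecStd]
      simp only [if_neg hpre, mul_zero]
  have hstarf : ∀ (T : PathStd d n μ),
      star ((((Real.sqrt ((d : ℝ) + ((contAt (extWord T.val) (n - 1) : ℤ) : ℝ)))⁻¹ : ℝ) : ℂ))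
      = (((Real.sqrt ((d : ℝ) + ((contAt (extWord T.val) (n - 1) : ℤ) : ℝ)))⁻¹ : ℝ) : ℂ) := by
    intro T
    exact Complex.conj_ofReal _
  have hstar : ∀ (S : PrefixStd d n μ) (T : PathStd d n μ),
      star (vVec d n μ S T) *
        (((Real.sqrt ((d : ℝ) + ((contAt (extWord T.val) (n - 1) : ℤ) : ℝ)))⁻¹ : ℝ) : ℂ)
      = star (wVecStd d n μ S T) := by
    intro S T
    rw [← hcore S T, StarMul.star_mul, hstarf T]
  ext T' T
  rw [Matrix.mul_diagonal, Matrix.diagonal_mul, Vmat, WmatStd, Matrix.sum_apply,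
    Matrix.sum_apply, Finset.mul_sum, Finset.sum_mul]
  refine Finset.sum_congr rfl (fun S _ => ?_)
  rw [Matrix.vecMulVec_apply, Matrix.vecMulVec_apply, ← hcore S T', ← hstar S T]
  ring
end
end
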